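/- arXiv:math/0111188 — 3 statements merged into one kernel-verified Lean document; each statement's English description precedes it below -/
import Mathlib

section
/- Let H = dE_0 − m_1E_1 − ⋯ − m_rE_r be an E-standard class in Pic_r. Then for every σ in the Weyl group W_r and every 1 ≤ i ≤ r, one has H·(σ(E_i) + σ(E_{i+1}) + ⋯ + σ(E_r)) ≥ m_i + m_{i+1} + ⋯ + m_r; in particular the minimum of H·(σ(E_i) + ⋯ + σ(E_r)) over σ ∈ W_r equals m_i + ⋯ + m_r, attained at σ = id. -/
open Finset

/-- The intersection form on `Pic_r = ℤ^{r+1}`: the symmetric bilinear form with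
`E_0·E_0 = 1`, `E_i·E_i = -1` for `1 ≤ i ≤ r`, and `E_i·E_j = 0` for `i ≠ j`. -/
def inter {r : ℕ} (x y : Fin (r + 1) → ℤ) : ℤ :=
  2 * (x 0 * y 0) - ∑ i, x i * y i

/-- The standard basis class `E_i` of `Pic_r`. -/
def Eb (r : ℕ) (i : Fin (r + 1)) : Fin (r + 1) → ℤ :=
  fun j => if j = i then 1 else 0

/-- The canonical class `K = -3E_0 + E_1 + ⋯ + E_r`. -/
def Kc (r : ℕ) : Fin (r + 1) → ℤ :=
  fun j => if j = 0 then -3 else 1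

/-- The roots `r_0 = E_0 - E_1 - E_2 - E_3` and `r_i = E_i - E_{i+1}` for `1 ≤ i ≤ r-1`. -/
def root (r : ℕ) (i : Fin r) : Fin (r + 1) → ℤ :=
  if (i : ℕ) = 0 then Eb r 0 - Eb r 1 - Eb r 2 - Eb r 3
  else Eb r i.castSucc - Eb r i.succ

/-- The reflection `σ_v(x) = x + (x·v) v` in the root `v`. -/
def reflect {r : ℕ} (v x : Fin (r + 1) → ℤ) : Fin (r + 1) → ℤ :=
  x + inter x v • v

/-- Membership in the Weyl group `W_r`: the group of transformations of `Pic_r`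
generated by the reflections `σ_i(x) = x + (x·r_i) r_i`, `0 ≤ i ≤ r-1` (since each
generator is an involution, the submonoid generated coincides with the subgroup
generated). -/
def InWeyl (r : ℕ) (f : (Fin (r + 1) → ℤ) → (Fin (r + 1) → ℤ)) : Prop :=
  f ∈ Submonoid.closure
    { g : Function.End (Fin (r + 1) → ℤ) | ∃ i : Fin r, g = reflect (root r i) }

/-- `H = dE_0 - m_1E_1 - ⋯ - m_rE_r` (so `d = H 0`, `m_i = -H i`) is E-standard:
`d ≥ m_1 ≥ ⋯ ≥ m_r ≥ 0`, `d ≥ m_1 + m_2` and `d ≥ m_1 + m_2 + m_3`. -/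
def EStandard (r : ℕ) (H : Fin (r + 1) → ℤ) : Prop :=
  -H 1 ≤ H 0 ∧
  (∀ i j : Fin (r + 1), 1 ≤ (i : ℕ) → i ≤ j → -H j ≤ -H i) ∧
  0 ≤ -H (Fin.last r) ∧
  -H 1 + -H 2 ≤ H 0 ∧
  -H 1 + -H 2 + -H 3 ≤ H 0

/-- `H = dE_0 - m_1E_1 - ⋯ - m_rE_r` is E-semi-standard: `d ≥ 0`,
`d ≥ m_1 ≥ ⋯ ≥ m_r` and `d ≥ m_1 + m_2 + m_3` (the `m_i` may be negative). -/
def ESemiStandard (r : ℕ) (H : Fin (r + 1) → ℤ) : Prop :=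
  0 ≤ H 0 ∧
  -H 1 ≤ H 0 ∧
  (∀ i j : Fin (r + 1), 1 ≤ (i : ℕ) → i ≤ j → -H j ≤ -H i) ∧
  -H 1 + -H 2 + -H 3 ≤ H 0

/-- A class is standard if its image under some element of `W_r` is E-standard. -/
def Standard (r : ℕ) (H : Fin (r + 1) → ℤ) : Prop :=
  ∃ f, InWeyl r f ∧ EStandard r (f H)

/-- A class is semi-standard if its image under some element of `W_r` is
E-semi-standard. -/
def SemiStandard (r : ℕ) (H : Fin (r + 1) → ℤ) : Prop :=
  ∃ f, InWeyl r f ∧ ESemiStandard r (f H)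

/-- An exceptional class: an element of the `W_r`-orbit of `E_r`. -/
def Exceptional (r : ℕ) (x : Fin (r + 1) → ℤ) : Prop :=
  ∃ f, InWeyl r f ∧ x = f (Eb r (Fin.last r))

/-- A line class: an element of the `W_r`-orbit of `E_0`. -/
def LineClass (r : ℕ) (x : Fin (r + 1) → ℤ) : Prop :=
  ∃ f, InWeyl r f ∧ x = f (Eb r 0)

/-- A pencil class: an element of the `W_r`-orbit of `E_0 - E_1`. -/
def PencilClass (r : ℕ) (x : Fin (r + 1) → ℤ) : Prop :=
  ∃ f, InWeyl r f ∧ x = f (Eb r 0 - Eb r 1)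

/-- The elliptic generating class `C_i = 3E_0 - E_1 - ⋯ - E_i`. -/
def Cc (r : ℕ) (i : Fin (r + 1)) : Fin (r + 1) → ℤ :=
  fun j => if j = 0 then 3 else if j ≤ i then -1 else 0

/-- The Euler characteristic `χ(H) = 1 + (H·H - H·K)/2`. -/
def chi (r : ℕ) (H : Fin (r + 1) → ℤ) : ℤ :=
  1 + (inter H H - inter H (Kc r)) / 2


namespace WeylAux

variable {r : ℕ}

/- ## bilinearity -/

lemma inter_comm (x y : Fin (r+1) → ℤ) : inter x y = inter y x := by
  unfold inter
  congr 1
  · ring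
  · exact Finset.sum_congr rfl fun i _ => mul_comm _ _

lemma inter_add_right (x y z : Fin (r+1) → ℤ) :
    inter x (y + z) = inter x y + inter x z := by
  unfold inter
  simp only [Pi.add_apply, mul_add, Finset.sum_add_distrib]
  ring

lemma inter_sub_right (x y z : Fin (r+1) → ℤ) :
    inter x (y - z) = inter x y - inter x z := by
  unfold inter
  simp only [Pi.sub_apply, mul_sub, Finset.sum_sub_distrib]
  ring

lemma inter_smul_right (x y : Fin (r+1) → ℤ) (c : ℤ) :
    inter x (c • y) = c * inter x y := by
  unfold inter
  simp only [Pi.smul_apply, smul_eq_mul]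
  have h : (∑ i : Fin (r+1), x i * (c * y i)) = c * ∑ i : Fin (r+1), x i * y i := by
    rw [Finset.mul_sum]
    exact Finset.sum_congr rfl fun i _ => by ring
  rw [h]
  ring

lemma inter_add_left (x y z : Fin (r+1) → ℤ) :
    inter (x + y) z = inter x z + inter y z := by
  rw [inter_comm, inter_add_right, inter_comm z x, inter_comm z y]

lemma inter_sub_left (x y z : Fin (r+1) → ℤ) :
    inter (x - y) z = inter x z - inter y z := by
  rw [inter_comm, inter_sub_right, inter_comm z x, inter_comm z y]

lemma inter_smul_left (x y : Fin (r+1) → ℤ) (c : ℤ) :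
    inter (c • x) y = c * inter x y := by
  rw [inter_comm, inter_smul_right, inter_comm]

lemma inter_zero_left (y : Fin (r+1) → ℤ) : inter 0 y = 0 := by
  unfold inter; simp

lemma inter_zero_right (x : Fin (r+1) → ℤ) : inter x 0 = 0 := by
  rw [inter_comm]; exact inter_zero_left x

lemma inter_sum_right {α : Type*} (x : Fin (r+1) → ℤ) (s : Finset α)
    (f : α → (Fin (r+1) → ℤ)) :
    inter x (∑ j ∈ s, f j) = ∑ j ∈ s, inter x (f j) := by
  classical
  induction s using Finset.induction_on with
  | empty => simp [inter_zero_right]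
  | insert a s h ih => simp [Finset.sum_insert h, inter_add_right, ih]

/- ## values on basis vectors -/

lemma interEbEb (a b : Fin (r+1)) :
    inter (Eb r a) (Eb r b)
      = 2 * ((if a = 0 then 1 else 0) * (if b = 0 then 1 else 0))
        - (if a = b then 1 else 0) := by
  unfold inter Eb
  congr 1
  · by_cases ha : a = 0 <;> by_cases hb : b = 0 <;>
      simp [ha, hb, eq_comm, Ne.symm] <;> simp [eq_comm] at * <;> simp [ha, hb]
  · by_cases hab : a = b
    · subst hab; simp
    · rw [if_neg hab]
      rw [Finset.sum_eq_zero]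
      intro i _
      by_cases hia : i = a <;> by_cases hib : i = b <;> simp_all

lemma interEbR (x : Fin (r+1) → ℤ) (b : Fin (r+1)) :
    inter x (Eb r b) = (if b = 0 then 2 * x 0 else 0) - x b := by
  unfold inter Eb
  have h1 : ∑ i, x i * (if i = b then (1:ℤ) else 0) = x b := by
    simp [mul_ite]
  rw [h1]
  by_cases hb : b = 0
  · subst hb
    rw [if_pos rfl, if_pos rfl]
    ring
  · rw [if_neg hb, if_neg (show ¬((0 : Fin (r+1)) = b) from fun h => hb h.symm)]
    ring

end WeylAux


namespace WeylAux

variable {r : ℕ}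

/- ## reflection algebra -/

lemma reflect_add (v x y : Fin (r+1) → ℤ) :
    reflect v (x + y) = reflect v x + reflect v y := by
  unfold reflect
  rw [inter_add_left]
  module

lemma reflect_smul (v x : Fin (r+1) → ℤ) (c : ℤ) :
    reflect v (c • x) = c • reflect v x := by
  unfold reflect
  rw [inter_smul_left]
  module

lemma reflect_invol {v : Fin (r+1) → ℤ} (hv : inter v v = -2) (x : Fin (r+1) → ℤ) :
    reflect v (reflect v x) = x := by
  unfold reflect
  rw [inter_add_left, inter_smul_left, hv]
  module

lemma reflect_comm {u v : Fin (r+1) → ℤ} (huv : inter u v = 0) (hvu : inter v u = 0)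
    (x : Fin (r+1) → ℤ) :
    reflect u (reflect v x) = reflect v (reflect u x) := by
  unfold reflect
  rw [inter_add_left, inter_smul_left, inter_add_left, inter_smul_left, huv, hvu]
  module

lemma reflect_braid {u v : Fin (r+1) → ℤ} (huu : inter u u = -2) (hvv : inter v v = -2)
    (huv : inter u v = 1) (hvu : inter v u = 1) (x : Fin (r+1) → ℤ) :
    reflect u (reflect v (reflect u x)) = reflect v (reflect u (reflect v x)) := by
  unfold reflect
  rw [inter_add_left, inter_smul_left, inter_add_left, inter_smul_left,
    inter_add_left, inter_smul_left, inter_add_left, inter_smul_left,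
    inter_add_left, inter_smul_left, inter_add_left, inter_smul_left,
    huu, hvv, huv, hvu]
  module

/- ## words -/

def piw (w : List (Fin r)) (x : Fin (r+1) → ℤ) : Fin (r+1) → ℤ :=
  w.foldr (fun i y => reflect (root r i) y) x

lemma piw_nil (x : Fin (r+1) → ℤ) : piw [] x = x := rfl

lemma piw_cons (i : Fin r) (w : List (Fin r)) (x : Fin (r+1) → ℤ) :
    piw (i :: w) x = reflect (root r i) (piw w x) := rfl

lemma piw_append (v w : List (Fin r)) (x : Fin (r+1) → ℤ) :
    piw (v ++ w) x = piw v (piw w x) := by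
  unfold piw
  rw [List.foldr_append]

lemma piw_add (w : List (Fin r)) (x y : Fin (r+1) → ℤ) :
    piw w (x + y) = piw w x + piw w y := by
  induction w with
  | nil => rfl
  | cons i w ih => rw [piw_cons, piw_cons, piw_cons, ih, reflect_add]

lemma piw_smul (w : List (Fin r)) (c : ℤ) (x : Fin (r+1) → ℤ) :
    piw w (c • x) = c • piw w x := by
  induction w with
  | nil => rfl
  | cons i w ih => rw [piw_cons, piw_cons, ih, reflect_smul]

lemma piw_sum {α : Type*} (w : List (Fin r)) (s : Finset α) (g : α → (Fin (r+1) → ℤ)) :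
    piw w (∑ j ∈ s, g j) = ∑ j ∈ s, piw w (g j) := by
  classical
  induction s using Finset.induction_on with
  | empty =>
      simp only [Finset.sum_empty]
      have : (0 : Fin (r+1) → ℤ) = (0 : ℤ) • 0 := by simp
      rw [this, piw_smul]; simp
  | insert a s h ih =>
      rw [Finset.sum_insert h, Finset.sum_insert h, piw_add, ih]

/- ## the cone of positive roots -/

def Cone (r : ℕ) : AddSubmonoid (Fin (r+1) → ℤ) :=
  AddSubmonoid.closure (Set.range (root r))

lemma root_mem_cone (k : Fin r) : root r k ∈ Cone r :=
  AddSubmonoid.subset_closure (Set.mem_range_self k)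

lemma cone_inter_nonneg {H : Fin (r+1) → ℤ} (hdom : ∀ k, 0 ≤ inter H (root r k)) :
    ∀ v ∈ Cone r, 0 ≤ inter H v := by
  intro v hv
  induction hv using AddSubmonoid.closure_induction with
  | mem x hx => obtain ⟨k, rfl⟩ := hx; exact hdom k
  | zero => rw [inter_zero_right]
  | add x y _ _ hx hy => rw [inter_add_right]; omega

end WeylAux

namespace WeylAux

variable {r : ℕ}

/- ## Gram matrix facts -/

lemma root_self (hr : 3 ≤ r) (t : Fin r) :
    inter (root r t) (root r t) = -2 := by
  have ht := t.isLt
  have v1 : ((1 : Fin (r+1)) : ℕ) = 1 := by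
    rw [Fin.coe_ofNat_eq_mod]; exact Nat.mod_eq_of_lt (by omega)
  have v2 : ((2 : Fin (r+1)) : ℕ) = 2 := by
    rw [Fin.coe_ofNat_eq_mod]; exact Nat.mod_eq_of_lt (by omega)
  have v3 : ((3 : Fin (r+1)) : ℕ) = 3 := by
    rw [Fin.coe_ofNat_eq_mod]; exact Nat.mod_eq_of_lt (by omega)
  have e1 : 1 % (r+1) = 1 := Nat.mod_eq_of_lt (by omega)
  have e2 : 2 % (r+1) = 2 := Nat.mod_eq_of_lt (by omega)
  have e3 : 3 % (r+1) = 3 := Nat.mod_eq_of_lt (by omega)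
  unfold root
  by_cases h0 : (t : ℕ) = 0 <;>
    simp only [h0, reduceIte] <;>
    simp only [inter_sub_left, inter_sub_right, interEbEb] <;>
    simp [Fin.ext_iff, v1, v2, v3, e1, e2, e3] <;>
    (try split_ifs) <;> omega

lemma root_gram (hr : 3 ≤ r) {t k : Fin r} (h : t ≠ k) :
    inter (root r k) (root r t) = 0 ∨ inter (root r k) (root r t) = 1 := by
  have ht := t.isLt
  have hk := k.isLt
  have hne : (t : ℕ) ≠ (k : ℕ) := fun hh => h (Fin.ext hh)
  have v1 : ((1 : Fin (r+1)) : ℕ) = 1 := by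
    rw [Fin.coe_ofNat_eq_mod]; exact Nat.mod_eq_of_lt (by omega)
  have v2 : ((2 : Fin (r+1)) : ℕ) = 2 := by
    rw [Fin.coe_ofNat_eq_mod]; exact Nat.mod_eq_of_lt (by omega)
  have v3 : ((3 : Fin (r+1)) : ℕ) = 3 := by
    rw [Fin.coe_ofNat_eq_mod]; exact Nat.mod_eq_of_lt (by omega)
  have e1 : 1 % (r+1) = 1 := Nat.mod_eq_of_lt (by omega)
  have e2 : 2 % (r+1) = 2 := Nat.mod_eq_of_lt (by omega)
  have e3 : 3 % (r+1) = 3 := Nat.mod_eq_of_lt (by omega)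
  unfold root
  by_cases h0 : (t : ℕ) = 0 <;> by_cases h0' : (k : ℕ) = 0 <;>
    simp only [h0, h0', reduceIte] <;>
    simp only [inter_sub_left, inter_sub_right, interEbEb] <;>
    simp [Fin.ext_iff, v1, v2, v3, e1, e2, e3] <;>
    (try split_ifs) <;> omega

end WeylAux

namespace WeylAux

variable {r : ℕ}

/-- Key theorem: for any word `w` and generator `k`, either `π(w)(α_k)` lies in the
positive cone, or `π(w)∘σ_k` is represented by a strictly shorter word. -/
theorem KT (hr : 3 ≤ r) : ∀ (n : ℕ) (w : List (Fin r)), w.length ≤ n → ∀ (k : Fin r),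
    piw w (root r k) ∈ Cone r ∨
      ∃ w' : List (Fin r), w'.length < w.length ∧
        ∀ x, piw w' x = piw w (reflect (root r k) x) := by
  intro n
  induction n with
  | zero =>
      intro w hw k
      rw [List.length_eq_zero_iff.mp (Nat.le_zero.mp hw)]
      exact Or.inl (root_mem_cone k)
  | succ n ih =>
      intro w hw k
      rcases List.eq_nil_or_concat w with rfl | ⟨v, t, rfl⟩
      · exact Or.inl (root_mem_cone k)
      rw [List.concat_eq_append] at *
      have hv : v.length ≤ n := by
        have := hw; simp only [List.length_append, List.length_singleton] at this; omega
      have hlen : (v ++ [t]).length = v.length + 1 := by simp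
      by_cases htk : t = k
      · subst htk
        right
        refine ⟨v, by omega, fun x => ?_⟩
        rw [piw_append, piw_cons, piw_nil, reflect_invol (root_self hr t)]
      · -- t ≠ k
        have hexp : ∀ x, piw (v ++ [t]) x = piw v (reflect (root r t) x) := fun x => by
          rw [piw_append, piw_cons, piw_nil]
        rcases root_gram hr htk with ha | ha
        · -- a = 0 : commuting case
          have ha' : inter (root r t) (root r k) = 0 := by rw [inter_comm]; exact ha
          have hcomm := reflect_comm ha' ha
          have hrefl : reflect (root r t) (root r k) = root r k := by
            unfold reflect; rw [ha, zero_smul, add_zero]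
          rcases ih v hv k with hpos | ⟨v₂, hv₂len, hv₂⟩
          · left
            rw [hexp, hrefl]; exact hpos
          · right
            refine ⟨v₂ ++ [t], by simp; omega, fun x => ?_⟩
            rw [piw_append, piw_cons, piw_nil, hv₂, hexp, hcomm]
        · -- a = 1 : braid case
          have ha' : inter (root r t) (root r k) = 1 := by rw [inter_comm]; exact ha
          have hbraid := reflect_braid (root_self hr t) (root_self hr k) ha' ha
          have hreflTK : reflect (root r t) (root r k) = root r k + root r t := by
            unfold reflect; rw [ha, one_smul]
          have hreflKT : reflect (root r k) (root r t) = root r t + root r k := by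
            unfold reflect; rw [ha', one_smul]
          rcases ih v hv t with hposT | ⟨v₁, hv₁len, hv₁⟩
          · -- π(v)(α_t) positive
            rcases ih v hv k with hposK | ⟨v₂, hv₂len, hv₂⟩
            · -- both positive
              left
              rw [hexp, hreflTK, piw_add]
              exact AddSubmonoid.add_mem _ hposK hposT
            · -- shorter word v₂ for π(v)∘σ_k
              rcases ih v₂ (by omega) t with hposT2 | ⟨v₃, hv₃len, hv₃⟩
              · -- positive : π(w)(α_k) = π(v₂)(α_t)
                left
                rw [hexp, hreflTK]
                have : piw v (root r k + root r t) = piw v₂ (root r t) := by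
                  rw [hv₂, hreflKT]
                  congr 1
                  abel
                rw [this]; exact hposT2
              · -- final shortening case
                right
                refine ⟨v₃ ++ [k, t], ?_, fun x => ?_⟩
                · simp only [List.length_append, List.length_singleton]
                  simp at hlen ⊢
                  omega
                · have h1 : piw (v₃ ++ [k, t]) x
                      = piw v₃ (reflect (root r k) (reflect (root r t) x)) := by
                    rw [piw_append, piw_cons, piw_cons, piw_nil]
                  rw [h1, hv₃, hv₂, hexp]
                  rw [hbraid, reflect_invol (root_self hr k)]
          · -- shorter word v₁ for π(v)∘σ_t
            right
            refine ⟨v₁ ++ [k], by simp; omega, fun x => ?_⟩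
            rw [piw_append, piw_cons, piw_nil, hv₁, hexp]

/-- Dominance: for a dominant `λ` and any word `w`, `π(w)λ - λ` lies in the cone. -/
theorem Dlem (hr : 3 ≤ r) : ∀ (n : ℕ) (w : List (Fin r)), w.length ≤ n →
    ∀ lam : Fin (r+1) → ℤ, (∀ k, 0 ≤ inter lam (root r k)) →
    piw w lam - lam ∈ Cone r := by
  intro n
  induction n with
  | zero =>
      intro w hw lam _
      rw [List.length_eq_zero_iff.mp (Nat.le_zero.mp hw), piw_nil, sub_self]
      exact AddSubmonoid.zero_mem _
  | succ n ih =>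
      intro w hw lam hdom
      rcases List.eq_nil_or_concat w with rfl | ⟨v, k, rfl⟩
      · rw [piw_nil, sub_self]; exact AddSubmonoid.zero_mem _
      rw [List.concat_eq_append] at *
      have hv : v.length ≤ n := by
        have := hw; simp only [List.length_append, List.length_singleton] at this; omega
      have hexp : piw (v ++ [k]) lam = piw v (reflect (root r k) lam) := by
        rw [piw_append, piw_cons, piw_nil]
      rcases KT hr n v hv k with hpos | ⟨v', hv'len, hv'⟩
      · -- positive branch
        have hm : 0 ≤ inter lam (root r k) := hdom k
        have key : piw (v ++ [k]) lam
            = piw v lam + inter lam (root r k) • piw v (root r k) := by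
          rw [hexp]
          show piw v (lam + inter lam (root r k) • root r k) = _
          rw [piw_add, piw_smul]
        rw [key]
        have : piw v lam + inter lam (root r k) • piw v (root r k) - lam
            = (piw v lam - lam) + inter lam (root r k) • piw v (root r k) := by abel
        rw [this]
        refine AddSubmonoid.add_mem _ (ih v hv lam hdom) ?_
        obtain ⟨m, hm'⟩ : ∃ m : ℕ, inter lam (root r k) = (m : ℤ) :=
          ⟨(inter lam (root r k)).toNat, (Int.toNat_of_nonneg hm).symm⟩
        rw [hm', natCast_zsmul]
        exact AddSubmonoid.nsmul_mem _ hpos m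
      · -- shorter word branch
        have : piw (v ++ [k]) lam = piw v' lam := by rw [hexp, ← hv']
        rw [this]
        exact ih v' (by omega) lam hdom

end WeylAux

namespace WeylAux

variable {r : ℕ}

/-- Extraction of a word from Weyl-group membership. -/
lemma exists_word {f : Function.End (Fin (r+1) → ℤ)}
    (hf : f ∈ Submonoid.closure
      { g : Function.End (Fin (r + 1) → ℤ) | ∃ i : Fin r, g = reflect (root r i) }) :
    ∃ w : List (Fin r), ∀ x, f x = piw w x := by
  induction hf using Submonoid.closure_induction with
  | mem g hg =>
      obtain ⟨i, rfl⟩ := hg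
      exact ⟨[i], fun x => rfl⟩
  | one => exact ⟨[], fun x => rfl⟩
  | mul g h _ _ hg hh =>
      obtain ⟨wg, hwg⟩ := hg
      obtain ⟨wh, hwh⟩ := hh
      refine ⟨wg ++ wh, fun x => ?_⟩
      rw [piw_append, ← hwg, ← hwh]
      rfl

/-- An E-standard class is dominant. -/
lemma estandard_dom (hr : 3 ≤ r) {H : Fin (r+1) → ℤ} (hst : EStandard r H) :
    ∀ k : Fin r, 0 ≤ inter H (root r k) := by
  obtain ⟨h1, hmono, hlast, h2, h3⟩ := hst
  intro k
  have hk := k.isLt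
  by_cases hk0 : (k : ℕ) = 0
  · rw [root, if_pos hk0, inter_sub_right, inter_sub_right, inter_sub_right,
      interEbR, interEbR, interEbR, interEbR]
    have v1 : ((1 : Fin (r+1)) : ℕ) = 1 := by
      rw [Fin.coe_ofNat_eq_mod]; exact Nat.mod_eq_of_lt (by omega)
    have v2 : ((2 : Fin (r+1)) : ℕ) = 2 := by
      rw [Fin.coe_ofNat_eq_mod]; exact Nat.mod_eq_of_lt (by omega)
    have v3 : ((3 : Fin (r+1)) : ℕ) = 3 := by
      rw [Fin.coe_ofNat_eq_mod]; exact Nat.mod_eq_of_lt (by omega)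
    have n1 : (1 : Fin (r+1)) ≠ 0 := by
      intro hh; rw [Fin.ext_iff, v1, Fin.val_zero] at hh; omega
    have n2 : (2 : Fin (r+1)) ≠ 0 := by
      intro hh; rw [Fin.ext_iff, v2, Fin.val_zero] at hh; omega
    have n3 : (3 : Fin (r+1)) ≠ 0 := by
      intro hh; rw [Fin.ext_iff, v3, Fin.val_zero] at hh; omega
    rw [if_pos rfl, if_neg n1, if_neg n2, if_neg n3]
    simp only [zero_sub]
    omega
  · rw [root, if_neg hk0, inter_sub_right, interEbR, interEbR]
    have nc : k.castSucc ≠ 0 := by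
      intro hh; rw [Fin.ext_iff, Fin.coe_castSucc, Fin.val_zero] at hh; omega
    have ns : k.succ ≠ 0 := by
      intro hh; rw [Fin.ext_iff, Fin.val_succ, Fin.val_zero] at hh; omega
    rw [if_neg nc, if_neg ns]
    have hmk := hmono k.castSucc k.succ (by rw [Fin.coe_castSucc]; omega)
      (by rw [Fin.le_def, Fin.coe_castSucc, Fin.val_succ]; omega)
    omega

/-- The tail sums `E_i + ⋯ + E_r` are dominant. -/
lemma tail_dom (hr : 3 ≤ r) (i : Fin (r+1)) (hi : 1 ≤ (i : ℕ)) :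
    ∀ k : Fin r, 0 ≤ inter (∑ j ∈ Finset.Icc i (Fin.last r), Eb r j) (root r k) := by
  intro k
  have hk := k.isLt
  rw [inter_comm, inter_sum_right]
  by_cases hk0 : (k : ℕ) = 0
  · apply Finset.sum_nonneg
    intro j hj
    rw [root, if_pos hk0, inter_sub_left, inter_sub_left, inter_sub_left,
      interEbEb, interEbEb, interEbEb, interEbEb]
    have v1 : ((1 : Fin (r+1)) : ℕ) = 1 := by
      rw [Fin.coe_ofNat_eq_mod]; exact Nat.mod_eq_of_lt (by omega)
    have v2 : ((2 : Fin (r+1)) : ℕ) = 2 := by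
      rw [Fin.coe_ofNat_eq_mod]; exact Nat.mod_eq_of_lt (by omega)
    have v3 : ((3 : Fin (r+1)) : ℕ) = 3 := by
      rw [Fin.coe_ofNat_eq_mod]; exact Nat.mod_eq_of_lt (by omega)
    have e1 : 1 % (r+1) = 1 := Nat.mod_eq_of_lt (by omega)
    have e2 : 2 % (r+1) = 2 := Nat.mod_eq_of_lt (by omega)
    have e3 : 3 % (r+1) = 3 := Nat.mod_eq_of_lt (by omega)
    simp only [Fin.ext_iff, Fin.val_zero, v1, v2, v3, e1, e2, e3]
    have := Fin.le_def.mp (Finset.mem_Icc.mp hj).1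
    (try split_ifs) <;> omega
  · have expand : ∀ j, inter (root r k) (Eb r j)
        = (if k.succ = j then 1 else 0) - (if k.castSucc = j then 1 else 0) := by
      intro j
      rw [root, if_neg hk0, inter_sub_left, interEbEb, interEbEb]
      have nc : ¬ k.castSucc = 0 := by
        intro hh; rw [Fin.ext_iff, Fin.coe_castSucc, Fin.val_zero] at hh; omega
      have ns : ¬ k.succ = 0 := by
        intro hh; rw [Fin.ext_iff, Fin.val_succ, Fin.val_zero] at hh; omega
      rw [if_neg nc, if_neg ns]
      ring
    rw [Finset.sum_congr rfl (fun j _ => expand j), Finset.sum_sub_distrib,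
      Finset.sum_ite_eq, Finset.sum_ite_eq]
    by_cases hc : k.castSucc ∈ Finset.Icc i (Fin.last r)
    · have hs : k.succ ∈ Finset.Icc i (Fin.last r) := by
        rw [Finset.mem_Icc] at hc ⊢
        constructor
        · exact le_trans hc.1 (by rw [Fin.le_def, Fin.coe_castSucc, Fin.val_succ]; omega)
        · exact Fin.le_last _
      rw [if_pos hc, if_pos hs]
      norm_num
    · rw [if_neg hc]
      split_ifs <;> omega

/-- The equality part: `H·(E_i + ⋯ + E_r) = m_i + ⋯ + m_r`. -/
lemma eq_part (H : Fin (r+1) → ℤ) (i : Fin (r+1)) (hi : 1 ≤ (i : ℕ)) :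
    inter H (∑ j ∈ Finset.Icc i (Fin.last r), Eb r j)
      = ∑ j ∈ Finset.Icc i (Fin.last r), -H j := by
  rw [inter_sum_right]
  refine Finset.sum_congr rfl fun j hj => ?_
  rw [Finset.mem_Icc] at hj
  have hj0 : j ≠ 0 := by
    intro hh
    rw [Fin.ext_iff, Fin.val_zero] at hh
    have := hj.1
    rw [Fin.le_def] at this
    omega
  rw [interEbR, if_neg hj0]
  ring

end WeylAux

open WeylAux

/-- Let `H = dE_0 − m_1E_1 − ⋯ − m_rE_r` be an E-standard class in `Pic_r`. Then for
every `σ` in the Weyl group `W_r` and every `1 ≤ i ≤ r`, one has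
`H·(σ(E_i) + ⋯ + σ(E_r)) ≥ m_i + ⋯ + m_r`; in particular the minimum of
`H·(σ(E_i) + ⋯ + σ(E_r))` over `σ ∈ W_r` equals `m_i + ⋯ + m_r`, attained at
`σ = id` (recall `m_j = -H j`). -/
theorem min_on_extendable_sequences (r : ℕ) (hr : 3 ≤ r) (H : Fin (r + 1) → ℤ)
    (hst : EStandard r H) (i : Fin (r + 1)) (hi : 1 ≤ (i : ℕ)) :
    (∀ f, InWeyl r f →
        ∑ j ∈ Finset.Icc i (Fin.last r), -H j
          ≤ inter H (∑ j ∈ Finset.Icc i (Fin.last r), f (Eb r j))) ∧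
      inter H (∑ j ∈ Finset.Icc i (Fin.last r), Eb r j)
        = ∑ j ∈ Finset.Icc i (Fin.last r), -H j := by
  have heq := eq_part H i hi
  refine ⟨?_, heq⟩
  intro f hf
  obtain ⟨w, hw⟩ := exists_word hf
  set T := ∑ j ∈ Finset.Icc i (Fin.last r), Eb r j with hT
  have hsum : (∑ j ∈ Finset.Icc i (Fin.last r), f (Eb r j)) = piw w T := by
    rw [hT, piw_sum]
    exact Finset.sum_congr rfl fun j _ => hw (Eb r j)
  rw [hsum]
  have hmem : piw w T - T ∈ Cone r := Dlem hr w.length w le_rfl T (tail_dom hr i hi)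
  have h0 : 0 ≤ inter H (piw w T - T) := cone_inter_nonneg (estandard_dom hr hst) _ hmem
  have hsplit : inter H (piw w T) = inter H T + inter H (piw w T - T) := by
    rw [← inter_add_right]
    congr 1
    abel
  rw [hsplit, heq]
  omega
end

section
/- Let H = dE_0 − m_1E_1 − ⋯ − m_rE_r be an E-standard class in Pic_r. Then for every σ in the Weyl group W_r, one has H·(σ(E_0 − E_1 − E_2) + σ(E_3) + ⋯ + σ(E_r)) ≥ (d − m_1 − m_2) + m_3 + ⋯ + m_r; in particular the minimum of this quantity over σ ∈ W_r equals d − m_1 − m_2 + m_3 + ⋯ + m_r, attained at σ = id. -/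
open Finset

namespace UOS
open Finset

variable {r : ℕ}

lemma inter_comm (x y : Fin (r+1) → ℤ) : inter x y = inter y x := by
  unfold inter
  have : ∑ i, x i * y i = ∑ i, y i * x i := by
    apply Finset.sum_congr rfl; intro i _; ring
  rw [this]; ring

lemma inter_add_left (x y z : Fin (r+1) → ℤ) : inter (x + y) z = inter x z + inter y z := by
  unfold inter
  simp only [Pi.add_apply]
  rw [show ∑ i, (x i + y i) * z i = ∑ i, (x i * z i + y i * z i) by
      apply Finset.sum_congr rfl; intro i _; ring, Finset.sum_add_distrib]
  ring

lemma inter_smul_left (c : ℤ) (x z : Fin (r+1) → ℤ) : inter (c • x) z = c * inter x z := by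
  unfold inter
  simp only [Pi.smul_apply, smul_eq_mul]
  rw [show ∑ i, c * x i * z i = c * ∑ i, x i * z i by rw [Finset.mul_sum]; apply Finset.sum_congr rfl; intro i _; ring]
  ring

lemma inter_neg_left (x z : Fin (r+1) → ℤ) : inter (-x) z = -inter x z := by
  have := inter_smul_left (-1) x z; simpa using this

lemma inter_sub_left (x y z : Fin (r+1) → ℤ) : inter (x - y) z = inter x z - inter y z := by
  rw [sub_eq_add_neg, inter_add_left, inter_neg_left, sub_eq_add_neg]

lemma inter_add_right (x y z : Fin (r+1) → ℤ) : inter x (y + z) = inter x y + inter x z := by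
  rw [inter_comm, inter_add_left, inter_comm y x, inter_comm z x]

lemma inter_smul_right (c : ℤ) (x z : Fin (r+1) → ℤ) : inter x (c • z) = c * inter x z := by
  rw [inter_comm, inter_smul_left, inter_comm]

lemma inter_sub_right (x y z : Fin (r+1) → ℤ) : inter x (y - z) = inter x y - inter x z := by
  rw [inter_comm, inter_sub_left, inter_comm y x, inter_comm z x]

lemma inter_zero_right (x : Fin (r+1) → ℤ) : inter x 0 = 0 := by
  unfold inter; simp

lemma inter_sum_right {ι : Type*} (x : Fin (r+1) → ℤ) (s : Finset ι) (g : ι → Fin (r+1) → ℤ) :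
    inter x (∑ j ∈ s, g j) = ∑ j ∈ s, inter x (g j) := by
  classical
  induction s using Finset.induction with
  | empty => simpa using inter_zero_right x
  | insert _ _ h ih => rw [Finset.sum_insert h, inter_add_right, ih, Finset.sum_insert h]

lemma inter_Eb_right (x : Fin (r+1) → ℤ) (a : Fin (r+1)) :
    inter x (Eb r a) = (if a = 0 then 2 * x 0 else 0) - x a := by
  unfold inter Eb
  have h1 : ∑ i, x i * (if i = a then 1 else 0) = x a := by
    rw [Finset.sum_congr rfl (fun i _ => by rw [mul_ite, mul_one, mul_zero])]
    simp
  rw [h1]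
  by_cases h : a = 0 <;> simp [h, eq_comm]

end UOS
namespace UOS2
open UOS
variable {r : ℕ}

lemma val0 : ((0 : Fin (r+1)) : ℕ) = 0 := rfl

lemma val1 (hr : 3 ≤ r) : ((1 : Fin (r+1)) : ℕ) = 1 := by
  have : ((1 : Fin (r+1)) : ℕ) = 1 % (r+1) := rfl
  rw [this, Nat.mod_eq_of_lt (by omega)]

lemma val2 (hr : 3 ≤ r) : ((2 : Fin (r+1)) : ℕ) = 2 := by
  have : ((2 : Fin (r+1)) : ℕ) = 2 % (r+1) := rfl
  rw [this, Nat.mod_eq_of_lt (by omega)]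

lemma val3 (hr : 3 ≤ r) : ((3 : Fin (r+1)) : ℕ) = 3 := by
  have : ((3 : Fin (r+1)) : ℕ) = 3 % (r+1) := rfl
  rw [this, Nat.mod_eq_of_lt (by omega)]

lemma reflect_add (v x y : Fin (r+1) → ℤ) : reflect v (x+y) = reflect v x + reflect v y := by
  unfold reflect; rw [inter_add_left]; funext k
  simp only [Pi.add_apply, Pi.smul_apply, smul_eq_mul]; ring

lemma reflect_smulz (v : Fin (r+1) → ℤ) (c : ℤ) (x : Fin (r+1) → ℤ) :
    reflect v (c • x) = c • reflect v x := by
  unfold reflect; rw [inter_smul_left]; funext k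
  simp only [Pi.add_apply, Pi.smul_apply, smul_eq_mul]; ring

lemma inter_reflect_both (v x y : Fin (r+1) → ℤ) (hv : inter v v = -2) :
    inter (reflect v x) (reflect v y) = inter x y := by
  unfold reflect
  simp only [inter_add_left, inter_add_right, inter_smul_left, inter_smul_right, hv,
    inter_comm v x, inter_comm v y]
  ring

lemma reflect_reflect (v x : Fin (r+1) → ℤ) (hv : inter v v = -2) :
    reflect v (reflect v x) = x := by
  unfold reflect
  simp only [inter_add_left, inter_smul_left, hv]
  funext k
  simp only [Pi.add_apply, Pi.smul_apply, smul_eq_mul]; ring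

lemma reflect_conj (u v x : Fin (r+1) → ℤ) (hu : inter u u = -2) :
    reflect u (reflect v x) = reflect (reflect u v) (reflect u x) := by
  have h := inter_reflect_both u x v hu
  show reflect u (x + inter x v • v) = _
  calc reflect u (x + inter x v • v)
      = reflect u x + inter x v • reflect u v := by rw [reflect_add, reflect_smulz]
    _ = reflect u x + inter (reflect u x) (reflect u v) • reflect u v := by rw [h]
    _ = _ := rfl

lemma fin_ne_of_val {a b : Fin (r+1)} (h : (a:ℕ) ≠ (b:ℕ)) : a ≠ b :=
  fun hh => h (congrArg Fin.val hh)

lemma root0_apply (i : Fin r) (hi : (i:ℕ) = 0) (k : Fin (r+1)) :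
    root r i k = (if k = 0 then 1 else 0) - (if k = 1 then 1 else 0)
      - (if k = 2 then 1 else 0) - (if k = 3 then 1 else 0) := by
  unfold root; rw [if_pos hi]; simp [Eb]

lemma rootp_apply (i : Fin r) (hi : ¬(i:ℕ) = 0) (k : Fin (r+1)) :
    root r i k = (if k = i.castSucc then 1 else 0) - (if k = i.succ then 1 else 0) := by
  unfold root; rw [if_neg hi]; simp [Eb]

lemma inter_root_zero (hr : 3 ≤ r) (x : Fin (r+1) → ℤ) (i : Fin r) (hi : (i:ℕ) = 0) :
    inter x (root r i) = x 0 + x 1 + x 2 + x 3 := by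
  unfold root; rw [if_pos hi]
  rw [inter_sub_right, inter_sub_right, inter_sub_right, inter_Eb_right, inter_Eb_right,
    inter_Eb_right, inter_Eb_right]
  have h1 : (1 : Fin (r+1)) ≠ 0 := fin_ne_of_val (by rw [val1 hr, val0]; omega)
  have h2 : (2 : Fin (r+1)) ≠ 0 := fin_ne_of_val (by rw [val2 hr, val0]; omega)
  have h3 : (3 : Fin (r+1)) ≠ 0 := fin_ne_of_val (by rw [val3 hr, val0]; omega)
  rw [if_pos rfl, if_neg h1, if_neg h2, if_neg h3]
  ring

lemma inter_root_pos (x : Fin (r+1) → ℤ) (i : Fin r) (hi : ¬(i:ℕ) = 0) :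
    inter x (root r i) = x i.succ - x i.castSucc := by
  unfold root; rw [if_neg hi]
  rw [inter_sub_right, inter_Eb_right, inter_Eb_right]
  have h1 : (i.castSucc : Fin (r+1)) ≠ 0 := fin_ne_of_val (by rw [Fin.coe_castSucc, val0]; omega)
  have h2 : (i.succ : Fin (r+1)) ≠ 0 := fin_ne_of_val (by rw [Fin.val_succ, val0]; omega)
  rw [if_neg h1, if_neg h2]
  ring

lemma root_sq (hr : 3 ≤ r) (i : Fin r) : inter (root r i) (root r i) = -2 := by
  by_cases hi : (i:ℕ) = 0
  · rw [inter_root_zero hr _ i hi, root0_apply i hi, root0_apply i hi, root0_apply i hi,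
      root0_apply i hi]
    simp only [Fin.ext_iff, val0, val1 hr, val2 hr, val3 hr]
    split_ifs <;> first | omega | exact (show False by assumption).elim
  · rw [inter_root_pos _ i hi, rootp_apply i hi, rootp_apply i hi]
    simp only [Fin.ext_iff, Fin.coe_castSucc, Fin.val_succ]
    split_ifs <;> first | omega | exact (show False by assumption).elim

lemma root_pair (hr : 3 ≤ r) (i j : Fin r) (hij : i ≠ j) :
    inter (root r i) (root r j) = 0 ∨ inter (root r i) (root r j) = 1 := by
  have hvij : (i:ℕ) ≠ (j:ℕ) := fun h => hij (Fin.ext h)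
  by_cases hj : (j:ℕ) = 0
  · have hi : ¬(i:ℕ) = 0 := by omega
    rw [inter_root_zero hr _ j hj, rootp_apply i hi, rootp_apply i hi, rootp_apply i hi,
      rootp_apply i hi]
    simp only [Fin.ext_iff, val0, val1 hr, val2 hr, val3 hr, Fin.coe_castSucc, Fin.val_succ]
    have : (i:ℕ) ≥ 1 := by omega
    split_ifs <;> first | omega | exact (show False by assumption).elim
  · rw [inter_root_pos _ j hj]
    by_cases hi : (i:ℕ) = 0
    · rw [root0_apply i hi, root0_apply i hi]
      simp only [Fin.ext_iff, val0, val1 hr, val2 hr, val3 hr, Fin.coe_castSucc, Fin.val_succ]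
      have hjr : (j:ℕ) < r := j.isLt
      split_ifs <;> first | omega | exact (show False by assumption).elim
    · rw [rootp_apply i hi, rootp_apply i hi]
      simp only [Fin.ext_iff, Fin.coe_castSucc, Fin.val_succ]
      split_ifs <;> first | omega | exact (show False by assumption).elim

end UOS2

namespace UOS3
open UOS UOS2
variable {r : ℕ}

/-- the generator reflections -/
def sg (r : ℕ) (i : Fin r) : (Fin (r+1) → ℤ) → (Fin (r+1) → ℤ) := reflect (root r i)

def act (r : ℕ) (l : List (Fin r)) : (Fin (r+1) → ℤ) → (Fin (r+1) → ℤ) :=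
  l.foldr (fun i f => sg r i ∘ f) id

@[simp] lemma act_nil : act r ([] : List (Fin r)) = id := rfl

@[simp] lemma act_cons (i : Fin r) (l : List (Fin r)) :
    act r (i :: l) = sg r i ∘ act r l := rfl

lemma act_append (l1 l2 : List (Fin r)) : act r (l1 ++ l2) = act r l1 ∘ act r l2 := by
  induction l1 with
  | nil => simp
  | cons a t ih => simp [ih, Function.comp_assoc]

@[simp] lemma act_singleton (i : Fin r) : act r [i] = sg r i := by
  funext x; simp [act, sg]

/-- linear & isometric -/
def Good (r : ℕ) (f : (Fin (r+1) → ℤ) → (Fin (r+1) → ℤ)) : Prop :=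
  (∀ x y, f (x+y) = f x + f y) ∧ (∀ (c : ℤ) x, f (c • x) = c • f x) ∧
  (∀ x y, inter (f x) (f y) = inter x y)

lemma good_id : Good r id := ⟨fun _ _ => rfl, fun _ _ => rfl, fun _ _ => rfl⟩

lemma good_comp {f g} (hf : Good r f) (hg : Good r g) : Good r (f ∘ g) := by
  obtain ⟨hf1, hf2, hf3⟩ := hf; obtain ⟨hg1, hg2, hg3⟩ := hg
  exact ⟨fun x y => by simp only [Function.comp_apply]; rw [hg1, hf1],
    fun c x => by simp only [Function.comp_apply]; rw [hg2, hf2],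
    fun x y => by simp only [Function.comp_apply]; rw [hf3, hg3]⟩

lemma good_sg (hr : 3 ≤ r) (i : Fin r) : Good r (sg r i) :=
  ⟨fun x y => reflect_add _ x y, fun c x => reflect_smulz _ c x,
   fun x y => inter_reflect_both _ x y (root_sq hr i)⟩

lemma good_act (hr : 3 ≤ r) (l : List (Fin r)) : Good r (act r l) := by
  induction l with
  | nil => exact good_id
  | cons a t ih => rw [act_cons]; exact good_comp (good_sg hr a) ih

lemma sg_sg (hr : 3 ≤ r) (i : Fin r) : sg r i ∘ sg r i = id := by
  funext x; exact reflect_reflect _ x (root_sq hr i)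

lemma good_zero {f} (hf : Good r f) : f 0 = 0 := by
  funext k
  have h := congrFun (hf.1 0 0) k
  rw [add_zero] at h
  simp only [Pi.add_apply] at h
  simp only [Pi.zero_apply]
  omega

lemma good_sum {f} (hf : Good r f) {ι : Type*} (s : Finset ι) (g : ι → Fin (r+1) → ℤ) :
    f (∑ j ∈ s, g j) = ∑ j ∈ s, f (g j) := by
  classical
  induction s using Finset.induction with
  | empty => simpa using good_zero hf
  | insert _ _ h ih => rw [Finset.sum_insert h, hf.1, ih, Finset.sum_insert h]

/-- membership: representable by a word -/
def WS (r : ℕ) (f : (Fin (r+1) → ℤ) → (Fin (r+1) → ℤ)) : Prop := ∃ l, act r l = f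

lemma ws_id : WS r id := ⟨[], rfl⟩
lemma ws_sg (i : Fin r) : WS r (sg r i) := ⟨[i], act_singleton i⟩
lemma ws_comp {f g} (hf : WS r f) (hg : WS r g) : WS r (f ∘ g) := by
  obtain ⟨l1, h1⟩ := hf; obtain ⟨l2, h2⟩ := hg
  exact ⟨l1 ++ l2, by rw [act_append, h1, h2]⟩

lemma inWeyl_iff {f} : InWeyl r f ↔ WS r f := by
  constructor
  · intro h
    induction h using Submonoid.closure_induction with
    | mem x hx => obtain ⟨i, rfl⟩ := hx; exact ws_sg i
    | one => exact ws_id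
    | mul x y hx hy ihx ihy => exact ws_comp ihx ihy
  · rintro ⟨l, rfl⟩
    induction l with
    | nil =>
        show (1 : Function.End (Fin (r+1) → ℤ)) ∈ Submonoid.closure
          {g : Function.End (Fin (r+1) → ℤ) | ∃ i : Fin r, g = reflect (root r i)}
        exact Submonoid.one_mem _
    | cons a t ih =>
        have hmem : (reflect (root r a) : Function.End (Fin (r+1) → ℤ)) ∈
            {g : Function.End (Fin (r+1) → ℤ) | ∃ i : Fin r, g = reflect (root r i)} := ⟨a, rfl⟩
        have ihm : (act r t : Function.End (Fin (r+1) → ℤ)) ∈ Submonoid.closure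
            {g : Function.End (Fin (r+1) → ℤ) | ∃ i : Fin r, g = reflect (root r i)} := ih
        have h2 := Submonoid.mul_mem (M := Function.End (Fin (r+1) → ℤ))
          (Submonoid.closure {g : Function.End (Fin (r+1) → ℤ) | ∃ i : Fin r, g = reflect (root r i)})
          (Submonoid.subset_closure hmem) ihm
        exact h2

end UOS3

namespace UOS4
open UOS UOS2 UOS3
variable {r : ℕ}

lemma inter_sum_left {ι : Type*} (x : Fin (r+1) → ℤ) (s : Finset ι) (g : ι → Fin (r+1) → ℤ) :
    inter (∑ j ∈ s, g j) x = ∑ j ∈ s, inter (g j) x := by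
  rw [inter_comm, inter_sum_right]
  exact Finset.sum_congr rfl (fun j _ => inter_comm x (g j))

def mat (r : ℕ) (f : (Fin (r+1) → ℤ) → (Fin (r+1) → ℤ)) : Matrix (Fin (r+1)) (Fin (r+1)) ℤ :=
  Matrix.of fun i j => f (Eb r j) i

lemma basis_expand (x : Fin (r+1) → ℤ) : x = ∑ j, x j • Eb r j := by
  funext k
  rw [Finset.sum_apply]
  simp only [Pi.smul_apply, Eb, smul_eq_mul]
  rw [Finset.sum_congr rfl (fun j (_ : j ∈ Finset.univ) => by rw [mul_ite, mul_one, mul_zero])]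
  simp

lemma mat_mul {f g} (hf : Good r f) : mat r (f ∘ g) = mat r f * mat r g := by
  ext a b
  rw [Matrix.mul_apply]
  show f (g (Eb r b)) a = _
  conv_lhs => rw [basis_expand (g (Eb r b))]
  rw [good_sum hf, Finset.sum_apply]
  apply Finset.sum_congr rfl
  intro k _
  rw [hf.2.1]
  simp only [Pi.smul_apply, smul_eq_mul, mat, Matrix.of_apply]
  ring

lemma mat_id : mat r id = 1 := by
  ext a b
  simp [mat, Eb, Matrix.one_apply]

lemma det_sg (hr : 3 ≤ r) (i : Fin r) : (mat r (sg r i)).det = -1 := by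
  have hm : mat r (sg r i) = 1 + Matrix.replicateCol (Fin 1) (root r i) *
      Matrix.replicateRow (Fin 1) (fun j => inter (Eb r j) (root r i)) := by
    ext a b
    have lhs : mat r (sg r i) a b
        = (if a = b then 1 else 0) + root r i a * inter (Eb r b) (root r i) := by
      show reflect (root r i) (Eb r b) a = _
      simp only [reflect, Pi.add_apply, Pi.smul_apply, smul_eq_mul, Eb]
      ring
    have rhs : ((1 + Matrix.replicateCol (Fin 1) (root r i) *
        Matrix.replicateRow (Fin 1) (fun j => inter (Eb r j) (root r i))
        : Matrix (Fin (r+1)) (Fin (r+1)) ℤ)) a b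
        = (if a = b then 1 else 0) + root r i a * inter (Eb r b) (root r i) := by
      rw [Matrix.add_apply, Matrix.mul_apply, Matrix.one_apply]
      simp [Matrix.replicateCol_apply, Matrix.replicateRow_apply]
    exact lhs.trans rhs.symm
  have hd : dotProduct (fun j => inter (Eb r j) (root r i)) (root r i) = -2 := by
    show (∑ j, inter (Eb r j) (root r i) * root r i j) = -2
    rw [Finset.sum_congr rfl (fun j (_ : j ∈ Finset.univ) => by
      rw [show inter (Eb r j) (root r i) * root r i j
        = inter (root r i j • Eb r j) (root r i) from by rw [inter_smul_left]; ring])]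
    rw [← inter_sum_left, ← basis_expand, root_sq hr]
  rw [hm]
  refine (Matrix.det_one_add_replicateCol_mul_replicateRow (ι := Fin 1) (root r i)
    (fun j => inter (Eb r j) (root r i))).trans ?_
  rw [hd]
  norm_num

lemma det_act (hr : 3 ≤ r) (l : List (Fin r)) : (mat r (act r l)).det = (-1)^l.length := by
  induction l with
  | nil => rw [act_nil, mat_id]; simp
  | cons a t ih =>
      rw [act_cons, mat_mul (good_sg hr a), Matrix.det_mul, det_sg hr, ih, List.length_cons,
        pow_succ]
      ring

lemma parity_eq (hr : 3 ≤ r) {l l' : List (Fin r)} (h : act r l = act r l') :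
    ((-1:ℤ))^l.length = (-1)^l'.length := by
  rw [← det_act hr, h, det_act hr]

noncomputable def len (r : ℕ) (f : (Fin (r+1) → ℤ) → (Fin (r+1) → ℤ)) : ℕ :=
  sInf {n | ∃ l : List (Fin r), act r l = f ∧ l.length = n}

lemma len_le {f} (l : List (Fin r)) (hl : act r l = f) : len r f ≤ l.length :=
  Nat.sInf_le ⟨l, hl, rfl⟩

lemma len_spec {f} (hf : WS r f) : ∃ l, act r l = f ∧ l.length = len r f := by
  obtain ⟨l, hl⟩ := hf
  have hne : {n | ∃ l : List (Fin r), act r l = f ∧ l.length = n}.Nonempty :=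
    ⟨l.length, ⟨l, hl, rfl⟩⟩
  exact Nat.sInf_mem hne

lemma eq_id_of_len_zero {f} (hf : WS r f) (h : len r f = 0) : f = id := by
  obtain ⟨l, hl, hlen⟩ := len_spec hf
  rw [h, List.length_eq_zero_iff] at hlen
  subst hlen
  exact hl.symm

lemma len_parity (hr : 3 ≤ r) {f} {l : List (Fin r)} (hl : act r l = f) (hf : WS r f) :
    (-1:ℤ)^l.length = (-1)^(len r f) := by
  obtain ⟨l0, h0, hlen⟩ := len_spec hf
  rw [← hlen]
  exact parity_eq hr (hl.trans h0.symm)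

lemma len_comp_sg_le {f} (hf : WS r f) (i : Fin r) : len r (f ∘ sg r i) ≤ len r f + 1 := by
  obtain ⟨l, hl, hlen⟩ := len_spec hf
  have h2 : act r (l ++ [i]) = f ∘ sg r i := by rw [act_append, hl, act_singleton]
  have := len_le _ h2
  rw [List.length_append] at this
  simpa [hlen] using this

lemma len_le_comp_sg (hr : 3 ≤ r) {f} (hf : WS r f) (i : Fin r) :
    len r f ≤ len r (f ∘ sg r i) + 1 := by
  obtain ⟨l, hl, hlen⟩ := len_spec (ws_comp hf (ws_sg i))
  have h2 : act r (l ++ [i]) = f := by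
    rw [act_append, hl, act_singleton, Function.comp_assoc, sg_sg hr, Function.comp_id]
  have := len_le _ h2
  rw [List.length_append] at this
  simpa [hlen] using this

lemma len_comp_sg_ne (hr : 3 ≤ r) {f} (hf : WS r f) (i : Fin r) :
    len r (f ∘ sg r i) ≠ len r f := by
  intro h
  obtain ⟨l, hl, hlen⟩ := len_spec hf
  have h2 : act r (l ++ [i]) = f ∘ sg r i := by rw [act_append, hl, act_singleton]
  have h3 := len_parity hr h2 (ws_comp hf (ws_sg i))
  rw [h, ← hlen, List.length_append, List.length_singleton, pow_succ] at h3
  have hne : ((-1:ℤ))^l.length ≠ 0 := pow_ne_zero _ (by norm_num)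
  have : ((-1:ℤ))^l.length = 0 := by linarith
  exact hne this

lemma len_comp_sg_cases (hr : 3 ≤ r) {f} (hf : WS r f) (i : Fin r) :
    len r (f ∘ sg r i) = len r f + 1 ∨ len r (f ∘ sg r i) + 1 = len r f := by
  have h1 := len_comp_sg_le hf i
  have h2 := len_le_comp_sg hr hf i
  have h3 := len_comp_sg_ne hr hf i
  omega

lemma exists_descent (hr : 3 ≤ r) {f} (hf : WS r f) (h : len r f ≠ 0) :
    ∃ j : Fin r, len r (f ∘ sg r j) + 1 = len r f := by
  obtain ⟨l, hl, hlen⟩ := len_spec hf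
  rcases l.eq_nil_or_concat with rfl | ⟨L, b, rfl⟩
  · rw [← hlen] at h
    simp at h
  refine ⟨b, ?_⟩
  have key : f ∘ sg r b = act r L := by
    rw [← hl, List.concat_eq_append, act_append, act_singleton, Function.comp_assoc, sg_sg hr,
      Function.comp_id]
  have h1 : len r (f ∘ sg r b) ≤ L.length := len_le _ key.symm
  have h2 : L.length + 1 = len r f := by
    rw [← hlen, List.concat_eq_append, List.length_append, List.length_singleton]
  have h3 := len_le_comp_sg hr hf b
  omega

end UOS4

namespace UOS5
open UOS UOS2 UOS3 UOS4
variable {r : ℕ}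

def Pos (r : ℕ) (x : Fin (r+1) → ℤ) : Prop :=
  ∃ c : Fin r → ℕ, x = ∑ t, ((c t : ℤ)) • root r t

lemma pos_zero : Pos r 0 := ⟨fun _ => 0, by simp⟩

lemma pos_root (t : Fin r) : Pos r (root r t) := by
  refine ⟨fun s => if s = t then 1 else 0, ?_⟩
  have hterm : ∀ s : Fin r, ((((if s = t then (1:ℕ) else 0) : ℕ)) : ℤ) • root r s
      = (if s = t then root r s else 0) := by
    intro s; by_cases h : s = t <;> simp [h]
  rw [Finset.sum_congr rfl fun s _ => hterm s,
    Finset.sum_ite_eq' Finset.univ t fun s => root r s]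
  simp

lemma pos_add {x y} (hx : Pos r x) (hy : Pos r y) : Pos r (x+y) := by
  obtain ⟨c, rfl⟩ := hx; obtain ⟨d, rfl⟩ := hy
  refine ⟨fun t => c t + d t, ?_⟩
  rw [← Finset.sum_add_distrib]
  apply Finset.sum_congr rfl
  intro t _
  push_cast
  rw [add_smul]

lemma pos_smul {x} (n : ℤ) (hn : 0 ≤ n) (hx : Pos r x) : Pos r (n • x) := by
  obtain ⟨c, rfl⟩ := hx
  refine ⟨fun t => n.toNat * c t, ?_⟩
  rw [Finset.smul_sum]
  apply Finset.sum_congr rfl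
  intro t _
  rw [smul_smul]
  congr 1
  push_cast
  rw [Int.toNat_of_nonneg hn]

lemma pos_inter {H x} (hH : ∀ t : Fin r, 0 ≤ inter H (root r t)) (hx : Pos r x) :
    0 ≤ inter H x := by
  obtain ⟨c, rfl⟩ := hx
  rw [inter_sum_right]
  apply Finset.sum_nonneg
  intro t _
  rw [inter_smul_right]
  exact mul_nonneg (by positivity) (hH t)

lemma good_ws {f} (hr : 3 ≤ r) (hf : WS r f) : Good r f := by
  obtain ⟨l, rfl⟩ := hf
  exact good_act hr l

lemma good_neg {f} (hf : Good r f) (x : Fin (r+1) → ℤ) : f (-x) = - f x := by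
  have := hf.2.1 (-1) x
  simpa using this

lemma sg_self (hr : 3 ≤ r) (i : Fin r) : sg r i (root r i) = -(root r i) := by
  show root r i + inter (root r i) (root r i) • root r i = -(root r i)
  rw [root_sq hr]
  funext k
  simp only [Pi.add_apply, Pi.smul_apply, Pi.neg_apply, smul_eq_mul]
  ring

lemma sg_other {i j : Fin r} (c : ℤ) (hc : inter (root r i) (root r j) = c) :
    sg r j (root r i) = root r i + c • root r j := by
  show root r i + inter (root r i) (root r j) • root r j = _
  rw [hc]

lemma braid (hr : 3 ≤ r) {i j : Fin r} (hc : inter (root r i) (root r j) = 1) :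
    sg r i ∘ sg r j ∘ sg r i = sg r j ∘ sg r i ∘ sg r j := by
  funext x
  show reflect (root r i) (reflect (root r j) (reflect (root r i) x))
      = reflect (root r j) (reflect (root r i) (reflect (root r j) x))
  rw [reflect_conj (root r i) (root r j) (reflect (root r i) x) (root_sq hr i),
    reflect_conj (root r j) (root r i) (reflect (root r j) x) (root_sq hr j),
    reflect_reflect (root r i) x (root_sq hr i),
    reflect_reflect (root r j) x (root_sq hr j)]
  have : reflect (root r i) (root r j) = reflect (root r j) (root r i) := by
    show root r j + inter (root r j) (root r i) • root r i
        = root r i + inter (root r i) (root r j) • root r j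
    rw [inter_comm (root r j) (root r i), hc, one_smul, one_smul]
    exact add_comm _ _
  rw [this]

lemma comm0 (hr : 3 ≤ r) {i j : Fin r} (hc : inter (root r i) (root r j) = 0) :
    sg r i ∘ sg r j = sg r j ∘ sg r i := by
  funext x
  show reflect (root r i) (reflect (root r j) x) = reflect (root r j) (reflect (root r i) x)
  rw [reflect_conj (root r i) (root r j) x (root_sq hr i)]
  have : reflect (root r i) (root r j) = root r j := by
    show root r j + inter (root r j) (root r i) • root r i = root r j
    rw [inter_comm (root r j) (root r i), hc, zero_smul, add_zero]
  rw [this]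

lemma sg_comp_vec (hr : 3 ≤ r) {i j : Fin r} (hc : inter (root r i) (root r j) = 1) :
    sg r i (sg r j (root r i)) = root r j := by
  rw [sg_other 1 hc, one_smul]
  have hadd : sg r i (root r i + root r j) = sg r i (root r i) + sg r i (root r j) :=
    (good_sg hr i).1 _ _
  rw [hadd, sg_self hr i, sg_other 1 (by rw [inter_comm]; exact hc), one_smul]
  funext k
  simp only [Pi.add_apply, Pi.neg_apply]
  ring

lemma greedy (hr : 3 ≤ r) : ∀ (n : ℕ) (w) (i j : Fin r), WS r w → len r w ≤ n →
    ∃ v, ∃ m : List (Fin r), (∀ t ∈ m, t = i ∨ t = j) ∧ WS r v ∧ w = v ∘ act r m ∧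
      len r w = len r v + m.length ∧ len r (v ∘ sg r i) = len r v + 1 ∧
      len r (v ∘ sg r j) = len r v + 1 := by
  intro n
  induction n with
  | zero =>
      intro w i j hw hlen
      have h0 : len r w = 0 := by omega
      have hi : len r (w ∘ sg r i) = len r w + 1 := by
        rcases len_comp_sg_cases hr hw i with h | h
        · exact h
        · omega
      have hj : len r (w ∘ sg r j) = len r w + 1 := by
        rcases len_comp_sg_cases hr hw j with h | h
        · exact h
        · omega
      exact ⟨w, [], (by simp), hw, (Function.comp_id w).symm, (by simp), hi, hj⟩
  | succ n ih =>
      intro w i j hw hlen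
      rcases len_comp_sg_cases hr hw i with hi | hi
      · rcases len_comp_sg_cases hr hw j with hj | hj
        · exact ⟨w, [], (by simp), hw, (Function.comp_id w).symm, (by simp), hi, hj⟩
        · have hw' : WS r (w ∘ sg r j) := ws_comp hw (ws_sg j)
          have hlen' : len r (w ∘ sg r j) ≤ n := by omega
          obtain ⟨v, m, hm, hv, heq, hsum, hstopi, hstopj⟩ := ih (w ∘ sg r j) i j hw' hlen'
          refine ⟨v, m ++ [j], ?_, hv, ?_, ?_, hstopi, hstopj⟩
          · intro t ht
            rcases List.mem_append.1 ht with h | h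
            · exact hm t h
            · simp at h; right; exact h
          · rw [act_append, act_singleton, ← Function.comp_assoc, ← heq,
              Function.comp_assoc, sg_sg hr, Function.comp_id]
          · rw [List.length_append, List.length_singleton]
            omega
      · have hw' : WS r (w ∘ sg r i) := ws_comp hw (ws_sg i)
        have hlen' : len r (w ∘ sg r i) ≤ n := by omega
        obtain ⟨v, m, hm, hv, heq, hsum, hstopi, hstopj⟩ := ih (w ∘ sg r i) i j hw' hlen'
        refine ⟨v, m ++ [i], ?_, hv, ?_, ?_, hstopi, hstopj⟩
        · intro t ht
          rcases List.mem_append.1 ht with h | h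
          · exact hm t h
          · simp at h; left; exact h
        · rw [act_append, act_singleton, ← Function.comp_assoc, ← heq,
            Function.comp_assoc, sg_sg hr, Function.comp_id]
        · rw [List.length_append, List.length_singleton]
          omega

lemma nf (hr : 3 ≤ r) (i j : Fin r) (hij : i ≠ j) :
    ∀ m : List (Fin r), (∀ t ∈ m, t = i ∨ t = j) →
      act r m = id ∨ act r m = sg r i ∨ act r m = sg r j ∨
      act r m = sg r i ∘ sg r j ∨ act r m = sg r j ∘ sg r i ∨
      act r m = sg r i ∘ sg r j ∘ sg r i := by
  intro m
  induction m with
  | nil => intro _; left; rfl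
  | cons a m' ihm =>
      intro hmem
      have hm' : ∀ t ∈ m', t = i ∨ t = j := fun t ht => hmem t (List.mem_cons_of_mem a ht)
      have ha : a = i ∨ a = j := hmem a List.mem_cons_self
      have hact : act r (a :: m') = sg r a ∘ act r m' := act_cons a m'
      rcases ihm hm' with h | h | h | h | h | h <;> rcases ha with ha | ha <;>
        rw [hact, h, ha]
      · right; left; exact Function.comp_id _
      · right; right; left; exact Function.comp_id _
      · left; exact sg_sg hr i
      · right; right; right; right; left; rfl
      · right; right; right; left; rfl
      · left; exact sg_sg hr j
      · right; right; left
        rw [← Function.comp_assoc, sg_sg hr i, Function.id_comp]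
      · rcases root_pair hr i j hij with hc | hc
        · right; left
          rw [comm0 hr hc, ← Function.comp_assoc, sg_sg hr j, Function.id_comp]
        · right; right; right; right; right
          exact (braid hr hc).symm
      · right; right; right; right; right; rfl
      · right; left
        rw [← Function.comp_assoc, sg_sg hr j, Function.id_comp]
      · right; right; right; right; left
        rw [← Function.comp_assoc, sg_sg hr i, Function.id_comp]
      · rcases root_pair hr i j hij with hc | hc
        · left
          rw [show sg r i ∘ (sg r j ∘ sg r i) = sg r j from by
            rw [← comm0 hr hc, ← Function.comp_assoc, sg_sg hr i, Function.id_comp]]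
          exact sg_sg hr j
        · right; right; right; left
          rw [braid hr hc, ← Function.comp_assoc, sg_sg hr j, Function.id_comp]

end UOS5

namespace UOS6
open UOS UOS2 UOS3 UOS4 UOS5
variable {r : ℕ}

theorem key (hr : 3 ≤ r) : ∀ (n : ℕ) (w : (Fin (r+1) → ℤ) → (Fin (r+1) → ℤ)) (i : Fin r),
    WS r w → len r w ≤ n → len r (w ∘ sg r i) = len r w + 1 → Pos r (w (root r i)) := by
  intro n
  induction n with
  | zero =>
      intro w i hw hlen _
      have hid : w = id := eq_id_of_len_zero hw (by omega)
      rw [hid]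
      exact pos_root i
  | succ n ih =>
      intro w i hw hlen hasc
      by_cases hle : len r w ≤ n
      · exact ih w i hw hle hasc
      have hne0 : len r w ≠ 0 := by omega
      obtain ⟨j, hj⟩ := exists_descent hr hw hne0
      have hij : i ≠ j := by
        intro h
        rw [h] at hasc
        omega
      obtain ⟨v, m, hm, hv, heq, hsum, hstopi, hstopj⟩ := greedy hr (n+1) w i j hw hlen
      have hk1 : 1 ≤ m.length := by
        rcases m with _ | ⟨a, m'⟩
        · exfalso
          rw [act_nil, Function.comp_id] at heq
          rw [heq] at hj
          omega
        · simp
      have hlenv : len r v ≤ n := by omega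
      have pi' := ih v i hv hlenv hstopi
      have pj' := ih v j hv hlenv hstopj
      have goodv : Good r v := good_ws hr hv
      rcases nf hr i j hij m hm with hu | hu | hu | hu | hu | hu
      · -- u = id
        rw [heq, hu, Function.comp_id]
        exact pi'
      · -- u = sg i : contradiction
        exfalso
        have hcomp : w ∘ sg r i = v := by
          rw [heq, hu, Function.comp_assoc, sg_sg hr i, Function.comp_id]
        rw [hcomp] at hasc
        omega
      · -- u = sg j
        have hw_eval : w (root r i) = v (sg r j (root r i)) := by
          rw [heq, hu]; rfl
        rcases root_pair hr i j hij with hc | hc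
        · rw [hw_eval, sg_other 0 hc, zero_smul, add_zero]
          exact pi'
        · rw [hw_eval, sg_other 1 hc, one_smul, goodv.1]
          exact pos_add pi' pj'
      · -- u = sg i ∘ sg j
        rcases root_pair hr i j hij with hc | hc
        · exfalso
          have hcomp : w ∘ sg r i = v ∘ sg r j := by
            rw [heq, hu, Function.comp_assoc]
            rw [show (sg r i ∘ sg r j) ∘ sg r i = sg r j from by
              rw [comm0 hr hc, Function.comp_assoc, sg_sg hr i, Function.comp_id]]
          have hb := len_comp_sg_le hv j
          rw [hcomp] at hasc
          omega
        · have hw_eval : w (root r i) = v (sg r i (sg r j (root r i))) := by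
            rw [heq, hu]; rfl
          rw [hw_eval, sg_comp_vec hr hc]
          exact pj'
      · -- u = sg j ∘ sg i : contradiction
        exfalso
        have hcomp : w ∘ sg r i = v ∘ sg r j := by
          rw [heq, hu, Function.comp_assoc]
          rw [show (sg r j ∘ sg r i) ∘ sg r i = sg r j from by
            rw [Function.comp_assoc, sg_sg hr i, Function.comp_id]]
        have hb := len_comp_sg_le hv j
        rw [hcomp] at hasc
        omega
      · -- u = sg i ∘ sg j ∘ sg i
        rcases root_pair hr i j hij with hc | hc
        · -- commuting: this form equals sg j
          have hform : sg r i ∘ sg r j ∘ sg r i = sg r j := by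
            rw [← comm0 hr hc, ← Function.comp_assoc, sg_sg hr i, Function.id_comp]
          have hw_eval : w (root r i) = v (sg r j (root r i)) := by
            rw [heq, hu, hform]; rfl
          rw [hw_eval, sg_other 0 hc, zero_smul, add_zero]
          exact pi'
        · exfalso
          have hcomp : w ∘ sg r i = (v ∘ sg r i) ∘ sg r j := by
            rw [heq, hu, Function.comp_assoc]
            rw [show (sg r i ∘ sg r j ∘ sg r i) ∘ sg r i = sg r i ∘ sg r j from by
              rw [Function.comp_assoc, Function.comp_assoc, sg_sg hr i, Function.comp_id]]
            rw [← Function.comp_assoc]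
          have hb1 : len r ((v ∘ sg r i) ∘ sg r j) ≤ len r v + 2 := by
            have h1 := len_comp_sg_le hv i
            have h2 := len_comp_sg_le (ws_comp hv (ws_sg i)) j
            omega
          rw [hcomp] at hasc
          have hk : m.length = 1 := by omega
          obtain ⟨t, rfl⟩ : ∃ t, m = [t] := by
            rcases m with _ | ⟨t, m'⟩
            · exact absurd hk (by simp)
            · rcases m' with _ | ⟨s, m''⟩
              · exact ⟨t, rfl⟩
              · exfalso
                rw [List.length_cons, List.length_cons] at hk
                omega
          have ht := hm t List.mem_cons_self
          rw [act_singleton] at hu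
          rcases ht with ht | ht
          · rw [ht] at hu
            have hev := congrFun hu (root r i)
            rw [show (sg r i ∘ sg r j ∘ sg r i) (root r i)
              = sg r i (sg r j (sg r i (root r i))) from rfl] at hev
            rw [sg_self hr i, good_neg (good_sg hr j), good_neg (good_sg hr i),
              sg_comp_vec hr hc] at hev
            have hroots : root r i = root r j := neg_inj.mp hev
            rw [← hroots] at hc
            rw [root_sq hr i] at hc
            omega
          · rw [ht] at hu
            have hev := congrFun hu (root r i)
            rw [show (sg r i ∘ sg r j ∘ sg r i) (root r i)
              = sg r i (sg r j (sg r i (root r i))) from rfl] at hev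
            rw [sg_self hr i, good_neg (good_sg hr j), good_neg (good_sg hr i),
              sg_comp_vec hr hc, sg_other 1 hc] at hev
            have hq : inter (root r i + (1:ℤ) • root r j) (root r j)
                = inter (-(root r j)) (root r j) := by rw [hev]
            rw [inter_add_left, inter_smul_left, inter_neg_left, root_sq hr j, hc] at hq
            omega

end UOS6

namespace UOS7
open UOS UOS2 UOS3 UOS4 UOS5 UOS6
variable {r : ℕ}

def Sfun (r : ℕ) : Fin (r+1) → ℤ :=
  fun j => if (j:ℕ) = 0 then 1 else if (j:ℕ) < 3 then -1 else 1

lemma Sfun_dom (hr : 3 ≤ r) (t : Fin r) : 0 ≤ inter (Sfun r) (root r t) := by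
  by_cases ht : (t:ℕ) = 0
  · rw [inter_root_zero hr _ t ht]
    unfold Sfun
    rw [val0, val1 hr, val2 hr, val3 hr]
    norm_num
  · rw [inter_root_pos _ t ht]
    unfold Sfun
    rw [Fin.coe_castSucc, Fin.val_succ]
    split_ifs <;> omega

lemma H_dom (hr : 3 ≤ r) {H} (hst : EStandard r H) (t : Fin r) : 0 ≤ inter H (root r t) := by
  obtain ⟨h1, hmono, hlast, h4, h5⟩ := hst
  by_cases ht : (t:ℕ) = 0
  · rw [inter_root_zero hr _ t ht]
    linarith
  · rw [inter_root_pos _ t ht]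
    have := hmono t.castSucc t.succ (by rw [Fin.coe_castSucc]; omega) (Fin.castSucc_le_succ t)
    linarith

lemma orbit_descend (hr : 3 ≤ r) : ∀ (N : ℕ) (l : List (Fin r)), l.length ≤ N →
    len r (act r l) = l.length →
    ∃ z, Pos r z ∧ act r l (Sfun r) = Sfun r + z := by
  intro N
  induction N with
  | zero =>
      intro l hl _
      have : l = [] := List.length_eq_zero_iff.mp (by omega)
      subst this
      exact ⟨0, pos_zero, by simp⟩
  | succ N ih =>
      intro l hl hred
      rcases l.eq_nil_or_concat with rfl | ⟨L, b, rfl⟩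
      · exact ⟨0, pos_zero, by simp⟩
      · rw [List.concat_eq_append] at hl hred ⊢
        rw [List.length_append, List.length_singleton] at hl hred
        have hwsL : WS r (act r L) := ⟨L, rfl⟩
        have hlenL : len r (act r L) = L.length := by
          have h1 : len r (act r L) ≤ L.length := len_le L rfl
          have h2 : len r (act r (L ++ [b])) ≤ len r (act r L) + 1 := by
            rw [act_append, act_singleton]
            exact len_comp_sg_le hwsL b
          omega
        have hasc : len r (act r L ∘ sg r b) = len r (act r L) + 1 := by
          rw [← act_singleton, ← act_append, hred, hlenL]
        obtain ⟨z, hz, hSz⟩ := ih L (by omega) hlenL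
        have hkey := key hr (len r (act r L)) (act r L) b hwsL le_rfl hasc
        refine ⟨z + (inter (Sfun r) (root r b)) • (act r L (root r b)), ?_, ?_⟩
        · exact pos_add hz (pos_smul _ (Sfun_dom hr b) hkey)
        · rw [act_append, act_singleton]
          show act r L (sg r b (Sfun r)) = _
          rw [show sg r b (Sfun r) = Sfun r + inter (Sfun r) (root r b) • root r b from rfl]
          rw [(good_ws hr hwsL).1, (good_ws hr hwsL).2.1, hSz]
          funext k
          simp only [Pi.add_apply, Pi.smul_apply, smul_eq_mul]
          ring

lemma orbit_ge (hr : 3 ≤ r) {w} (hw : WS r w) {H}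
    (hdom : ∀ t : Fin r, 0 ≤ inter H (root r t)) :
    inter H (Sfun r) ≤ inter H (w (Sfun r)) := by
  obtain ⟨l, hl, hlen⟩ := len_spec hw
  obtain ⟨z, hz, hSz⟩ := orbit_descend hr l.length l le_rfl (by rw [hl, ← hlen])
  rw [← hl, hSz, inter_add_right]
  have := pos_inter hdom hz
  linarith

lemma Sdef_eq (hr : 3 ≤ r) : (Eb r 0 - Eb r 1 - Eb r 2)
    + (∑ j ∈ Finset.Icc (3:Fin (r+1)) (Fin.last r), Eb r j) = Sfun r := by
  funext k
  rw [Pi.add_apply, Pi.sub_apply, Pi.sub_apply, Finset.sum_apply]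
  have hsum : ∑ j ∈ Finset.Icc (3:Fin (r+1)) (Fin.last r), Eb r j k
      = if k ∈ Finset.Icc (3:Fin (r+1)) (Fin.last r) then 1 else 0 := by
    rw [show (fun j => Eb r j k) = (fun j => if k = j then (1:ℤ) else 0) from rfl]
    exact Finset.sum_ite_eq _ k _
  rw [hsum]
  have hmem : (k ∈ Finset.Icc (3:Fin (r+1)) (Fin.last r)) ↔ 3 ≤ (k:ℕ) := by
    rw [Finset.mem_Icc]
    constructor
    · rintro ⟨h3, _⟩
      have := Fin.le_def.mp h3
      rw [val3 hr] at this
      exact this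
    · intro h
      refine ⟨Fin.le_def.mpr ?_, Fin.le_last k⟩
      rw [val3 hr]
      exact h
  have hifm : (if k ∈ Finset.Icc (3:Fin (r+1)) (Fin.last r) then (1:ℤ) else 0)
      = (if 3 ≤ (k:ℕ) then 1 else 0) := by
    by_cases h : 3 ≤ (k:ℕ)
    · rw [if_pos (hmem.mpr h), if_pos h]
    · rw [if_neg (fun hh => h (hmem.mp hh)), if_neg h]
  rw [hifm]
  have e0 : Eb r 0 k = if (k:ℕ) = 0 then 1 else 0 := by
    unfold Eb; simp only [Fin.ext_iff, val0]
  have e1 : Eb r 1 k = if (k:ℕ) = 1 then 1 else 0 := by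
    unfold Eb; simp only [Fin.ext_iff, val1 hr]
  have e2 : Eb r 2 k = if (k:ℕ) = 2 then 1 else 0 := by
    unfold Eb; simp only [Fin.ext_iff, val2 hr]
  rw [e0, e1, e2]
  unfold Sfun
  split_ifs <;> omega

lemma inter_Sdef (hr : 3 ≤ r) (H : Fin (r+1) → ℤ) : inter H ((Eb r 0 - Eb r 1 - Eb r 2)
      + ∑ j ∈ Finset.Icc (3:Fin (r+1)) (Fin.last r), Eb r j)
    = (H 0 + H 1 + H 2) + ∑ j ∈ Finset.Icc (3:Fin (r+1)) (Fin.last r), -H j := by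
  rw [inter_add_right, inter_sub_right, inter_sub_right, inter_Eb_right, inter_Eb_right,
    inter_Eb_right, inter_sum_right]
  have h1ne : (1:Fin (r+1)) ≠ 0 := fin_ne_of_val (by rw [val1 hr, val0]; omega)
  have h2ne : (2:Fin (r+1)) ≠ 0 := fin_ne_of_val (by rw [val2 hr, val0]; omega)
  rw [if_pos rfl, if_neg h1ne, if_neg h2ne]
  have hsum : ∑ j ∈ Finset.Icc (3:Fin (r+1)) (Fin.last r), inter H (Eb r j)
      = ∑ j ∈ Finset.Icc (3:Fin (r+1)) (Fin.last r), -H j := by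
    apply Finset.sum_congr rfl
    intro j hj
    have hj3 : (3:Fin (r+1)) ≤ j := (Finset.mem_Icc.mp hj).1
    have hjne : j ≠ 0 := by
      intro h
      rw [h] at hj3
      have := Fin.le_def.mp hj3
      rw [val3 hr, val0] at this
      omega
    rw [inter_Eb_right, if_neg hjne]
    ring
  rw [hsum]
  ring

end UOS7

/-- Let `H = dE_0 − m_1E_1 − ⋯ − m_rE_r` be an E-standard class in `Pic_r`. Then for
every `σ ∈ W_r`, one has
`H·(σ(E_0 − E_1 − E_2) + σ(E_3) + ⋯ + σ(E_r)) ≥ (d − m_1 − m_2) + m_3 + ⋯ + m_r`;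
in particular the minimum of this quantity over `σ ∈ W_r` equals
`d − m_1 − m_2 + m_3 + ⋯ + m_r`, attained at `σ = id`
(recall `d = H 0`, `m_j = -H j`, so `d − m_1 − m_2 = H 0 + H 1 + H 2`). -/
theorem min_on_unextendable_sequences (r : ℕ) (hr : 3 ≤ r) (H : Fin (r + 1) → ℤ)
    (hst : EStandard r H) :
    (∀ f, InWeyl r f →
        (H 0 + H 1 + H 2) + ∑ j ∈ Finset.Icc (3 : Fin (r + 1)) (Fin.last r), -H j
          ≤ inter H (f (Eb r 0 - Eb r 1 - Eb r 2)
              + ∑ j ∈ Finset.Icc (3 : Fin (r + 1)) (Fin.last r), f (Eb r j))) ∧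
      inter H ((Eb r 0 - Eb r 1 - Eb r 2)
          + ∑ j ∈ Finset.Icc (3 : Fin (r + 1)) (Fin.last r), Eb r j)
        = (H 0 + H 1 + H 2) + ∑ j ∈ Finset.Icc (3 : Fin (r + 1)) (Fin.last r), -H j := by
  constructor
  · intro f hf
    have hws : UOS3.WS r f := (UOS3.inWeyl_iff).mp hf
    have goodf : UOS3.Good r f := UOS5.good_ws hr hws
    have hcollect : f (Eb r 0 - Eb r 1 - Eb r 2)
        + ∑ j ∈ Finset.Icc (3 : Fin (r + 1)) (Fin.last r), f (Eb r j)
        = f ((Eb r 0 - Eb r 1 - Eb r 2)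
            + ∑ j ∈ Finset.Icc (3 : Fin (r + 1)) (Fin.last r), Eb r j) := by
      rw [goodf.1, UOS3.good_sum goodf]
    rw [hcollect, UOS7.Sdef_eq hr, ← UOS7.inter_Sdef hr H, UOS7.Sdef_eq hr]
    exact UOS7.orbit_ge hr hws (UOS7.H_dom hr hst)
  · exact UOS7.inter_Sdef hr H
end

section
/- The decomposition of a semi-standard class D in Pic_r as an orthogonal sum D = A + n_1F_1 + ⋯ + n_sF_s, where A is standard, each n_i is a positive integer, F_1, …, F_s are pairwise orthogonal exceptional classes and A·F_i = 0 for all i, is unique: if D = B + m_1G_1 + ⋯ + m_tG_t is another such decomposition, then A = B, s = t, and after reordering F_i = G_i and n_i = m_i for all i. -/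
open Finset

namespace OD
variable {r : ℕ}

/-! ### Bilinearity of `inter` -/

lemma inter_add_right (x y z : Fin (r+1) → ℤ) : inter x (y + z) = inter x y + inter x z := by
  simp only [inter, Pi.add_apply, mul_add, Finset.sum_add_distrib]; ring

lemma inter_add_left (x y z : Fin (r+1) → ℤ) : inter (x + y) z = inter x z + inter y z := by
  simp only [inter, Pi.add_apply, add_mul, Finset.sum_add_distrib]; ring

lemma inter_smul_right (c : ℤ) (x y : Fin (r+1) → ℤ) : inter x (c • y) = c * inter x y := by
  simp only [inter, Pi.smul_apply, smul_eq_mul, mul_sub, Finset.mul_sum]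
  congr 1
  · ring
  · apply Finset.sum_congr rfl; intro i _; ring

lemma inter_smul_left (c : ℤ) (x y : Fin (r+1) → ℤ) : inter (c • x) y = c * inter x y := by
  simp only [inter, Pi.smul_apply, smul_eq_mul, mul_sub, Finset.mul_sum]
  congr 1
  · ring
  · apply Finset.sum_congr rfl; intro i _; ring

lemma inter_comm (x y : Fin (r+1) → ℤ) : inter x y = inter y x := by
  simp only [inter]; congr 1
  · ring
  · apply Finset.sum_congr rfl; intro i _; ring

lemma inter_sub_right (x y z : Fin (r+1) → ℤ) : inter x (y - z) = inter x y - inter x z := by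
  simp only [inter, Pi.sub_apply, mul_sub, Finset.sum_sub_distrib]; ring

lemma inter_sub_left (x y z : Fin (r+1) → ℤ) : inter (x - y) z = inter x z - inter y z := by
  simp only [inter, Pi.sub_apply, sub_mul, Finset.sum_sub_distrib]; ring

lemma inter_sum_right {ι : Type*} (s : Finset ι) (x : Fin (r+1) → ℤ) (f : ι → Fin (r+1) → ℤ) :
    inter x (∑ i ∈ s, f i) = ∑ i ∈ s, inter x (f i) := by
  classical
  induction s using Finset.induction with
  | empty => simp [inter]
  | insert _ _ h ih =>
      rw [Finset.sum_insert h, Finset.sum_insert h, inter_add_right, ih]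

/-! ### Values on basis vectors -/

lemma inter_Eb_right (x : Fin (r+1) → ℤ) (a : Fin (r+1)) :
    inter x (Eb r a) = if a = 0 then x 0 else - x a := by
  have hs : ∑ i, x i * Eb r a i = x a := by
    simp [Eb, mul_ite]
  by_cases h : a = 0
  · subst h; simp [inter, hs, Eb]; ring
  · simp [inter, hs, Eb, Ne.symm h, h]

lemma inter_Eb_left (x : Fin (r+1) → ℤ) (a : Fin (r+1)) :
    inter (Eb r a) x = if a = 0 then x 0 else - x a := by
  rw [inter_comm]; exact inter_Eb_right x a

/-! ### Fin literal values -/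

lemma val1 (hr : 3 ≤ r) : ((1 : Fin (r+1)) : ℕ) = 1 := by
  have h : ((1 : Fin (r+1)) : ℕ) = 1 % (r+1) := rfl
  rw [h, Nat.mod_eq_of_lt (by omega)]

lemma val2 (hr : 3 ≤ r) : ((2 : Fin (r+1)) : ℕ) = 2 := by
  have h : ((2 : Fin (r+1)) : ℕ) = 2 % (r+1) := rfl
  rw [h, Nat.mod_eq_of_lt (by omega)]

lemma val3 (hr : 3 ≤ r) : ((3 : Fin (r+1)) : ℕ) = 3 := by
  have h : ((3 : Fin (r+1)) : ℕ) = 3 % (r+1) := rfl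
  rw [h, Nat.mod_eq_of_lt (by omega)]

lemma val0 : ((0 : Fin (r+1)) : ℕ) = 0 := rfl

/-! ### Coordinates of roots -/

lemma Eb_apply (a k : Fin (r+1)) : Eb r a k = if k = a then 1 else 0 := rfl

lemma root_apply (hr : 3 ≤ r) (i : Fin r) (k : Fin (r+1)) :
    root r i k = if (i : ℕ) = 0 then
        (if (k : ℕ) = 0 then 1 else if (k : ℕ) ≤ 3 then -1 else 0)
      else (if (k : ℕ) = (i : ℕ) then 1 else if (k : ℕ) = (i : ℕ) + 1 then -1 else 0) := by
  unfold root
  by_cases h : (i : ℕ) = 0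
  · rw [if_pos h, if_pos h]
    simp only [Pi.sub_apply, Eb_apply, Fin.ext_iff, val0, val1 hr, val2 hr, val3 hr, if_true,
      if_false]
    split_ifs <;> omega
  · rw [if_neg h, if_neg h]
    simp only [Pi.sub_apply, Eb_apply, Fin.ext_iff, Fin.coe_castSucc, Fin.val_succ, if_true,
      if_false]
    split_ifs <;> omega

lemma inter_root (hr : 3 ≤ r) (x : Fin (r+1) → ℤ) (i : Fin r) :
    inter x (root r i) = if (i : ℕ) = 0 then x 0 + x 1 + x 2 + x 3
      else x i.succ - x i.castSucc := by
  unfold root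
  by_cases h : (i : ℕ) = 0
  · rw [if_pos h, if_pos h]
    rw [inter_sub_right, inter_sub_right, inter_sub_right,
      inter_Eb_right, inter_Eb_right, inter_Eb_right, inter_Eb_right]
    have h1 : ¬ ((1 : Fin (r+1)) = 0) := by
      rw [Fin.ext_iff, val1 hr, val0]; omega
    have h2 : ¬ ((2 : Fin (r+1)) = 0) := by
      rw [Fin.ext_iff, val2 hr, val0]; omega
    have h3 : ¬ ((3 : Fin (r+1)) = 0) := by
      rw [Fin.ext_iff, val3 hr, val0]; omega
    rw [if_pos rfl, if_neg h1, if_neg h2, if_neg h3]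
    ring
  · rw [if_neg h, if_neg h]
    rw [inter_sub_right, inter_Eb_right, inter_Eb_right]
    have h1 : ¬ (i.castSucc = 0) := by
      rw [Fin.ext_iff, Fin.coe_castSucc, val0]; exact h
    have h2 : ¬ (i.succ = 0) := by
      rw [Fin.ext_iff, Fin.val_succ, val0]; omega
    rw [if_neg h1, if_neg h2]
    ring

lemma inter_root_left (hr : 3 ≤ r) (x : Fin (r+1) → ℤ) (i : Fin r) :
    inter (root r i) x = if (i : ℕ) = 0 then x 0 + x 1 + x 2 + x 3
      else x i.succ - x i.castSucc := by
  rw [inter_comm]; exact inter_root hr x i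

lemma root_sq (hr : 3 ≤ r) (i : Fin r) : inter (root r i) (root r i) = -2 := by
  rw [inter_root hr]
  simp only [root_apply hr, val0, val1 hr, val2 hr, val3 hr, Fin.coe_castSucc, Fin.val_succ,
    if_true, if_false]
  split_ifs <;> first | contradiction | omega

lemma root_pair (hr : 3 ≤ r) (i j : Fin r) (hij : i ≠ j) :
    inter (root r i) (root r j) = 0 ∨ inter (root r i) (root r j) = 1 := by
  have hvij : (i : ℕ) ≠ (j : ℕ) := fun h => hij (Fin.ext h)
  have hi : (i : ℕ) < r := i.isLt
  have hj : (j : ℕ) < r := j.isLt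
  rw [inter_root hr]
  simp only [root_apply hr, val0, val1 hr, val2 hr, val3 hr, Fin.coe_castSucc, Fin.val_succ,
    if_true, if_false]
  split_ifs <;> first | contradiction | omega

/-! ### Reflection algebra -/

lemma reflect_add (v x y : Fin (r+1) → ℤ) :
    reflect v (x + y) = reflect v x + reflect v y := by
  unfold reflect; rw [inter_add_left]; module

lemma reflect_smul (v : Fin (r+1) → ℤ) (c : ℤ) (x : Fin (r+1) → ℤ) :
    reflect v (c • x) = c • reflect v x := by
  unfold reflect; rw [inter_smul_left]; module

lemma reflect_invol (v : Fin (r+1) → ℤ) (hv : inter v v = -2) (x : Fin (r+1) → ℤ) :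
    reflect v (reflect v x) = x := by
  unfold reflect
  rw [inter_add_left, inter_smul_left, hv]
  module

lemma reflect_inter (v : Fin (r+1) → ℤ) (hv : inter v v = -2) (x y : Fin (r+1) → ℤ) :
    inter (reflect v x) (reflect v y) = inter x y := by
  unfold reflect
  rw [inter_add_left, inter_add_right, inter_add_right, inter_smul_left, inter_smul_right,
    inter_smul_right, inter_smul_left, hv, inter_comm y v]
  ring

lemma reflect_comm (v w : Fin (r+1) → ℤ) (hvw : inter v w = 0) (x : Fin (r+1) → ℤ) :
    reflect v (reflect w x) = reflect w (reflect v x) := by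
  have hwv : inter w v = 0 := by rw [inter_comm]; exact hvw
  unfold reflect
  rw [inter_add_left, inter_add_left, inter_smul_left, inter_smul_left, hvw, hwv]
  module

lemma reflect_braid (v w : Fin (r+1) → ℤ) (hv : inter v v = -2)
    (hvw : inter v w = 1) (x : Fin (r+1) → ℤ) :
    reflect v (reflect w (reflect v x)) = x + (inter x v + inter x w) • (v + w) := by
  have hwv : inter w v = 1 := by rw [inter_comm]; exact hvw
  unfold reflect
  simp only [inter_add_left, inter_smul_left, hv, hvw, hwv]
  module

/-! ### Generators and words -/

variable (r) in
def g (i : Fin r) : Function.End (Fin (r+1) → ℤ) := reflect (root r i)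

variable (r) in
def wprod (l : List (Fin r)) : Function.End (Fin (r+1) → ℤ) := (l.map (g r)).prod

lemma wprod_nil : wprod r ([] : List (Fin r)) = 1 := rfl

lemma wprod_cons (i : Fin r) (l : List (Fin r)) :
    wprod r (i :: l) = g r i * wprod r l := by
  simp [wprod]

lemma wprod_append (l₁ l₂ : List (Fin r)) :
    wprod r (l₁ ++ l₂) = wprod r l₁ * wprod r l₂ := by
  simp [wprod]

lemma wprod_singleton (i : Fin r) : wprod r [i] = g r i := by
  simp [wprod]

lemma mul_apply (f h : Function.End (Fin (r+1) → ℤ)) (x : Fin (r+1) → ℤ) :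
    (f * h) x = f (h x) := rfl

lemma one_apply (x : Fin (r+1) → ℤ) : (1 : Function.End (Fin (r+1) → ℤ)) x = x := rfl

lemma g_g (hr : 3 ≤ r) (i : Fin r) : g r i * g r i = 1 := by
  funext x
  exact reflect_invol _ (root_sq hr i) x

lemma inweyl_one : InWeyl r (1 : Function.End (Fin (r+1) → ℤ)) :=
  @Submonoid.one_mem _ (@Monoid.toMulOneClass _ instMonoidEnd) _

lemma inweyl_mul (f h : Function.End (Fin (r+1) → ℤ)) (hf : InWeyl r f) (hh : InWeyl r h) :
    InWeyl r (f * h) :=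
  @Submonoid.mul_mem _ (@Monoid.toMulOneClass _ instMonoidEnd) _ _ _ hf hh

lemma inweyl_gen (i : Fin r) : InWeyl r (g r i) := by
  have hs := @Submonoid.subset_closure (Function.End (Fin (r+1) → ℤ))
    (@Monoid.toMulOneClass _ instMonoidEnd)
    { g : Function.End (Fin (r+1) → ℤ) | ∃ i : Fin r, g = reflect (root r i) }
  exact hs ⟨i, rfl⟩

lemma InWeyl_iff_word (f : Function.End (Fin (r+1) → ℤ)) :
    InWeyl r f ↔ ∃ l : List (Fin r), f = wprod r l := by
  constructor
  · intro hf
    induction hf using Submonoid.closure_induction with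
    | mem x hx => obtain ⟨i, hi⟩ := hx; exact ⟨[i], by rw [wprod_singleton]; exact hi⟩
    | one => exact ⟨[], rfl⟩
    | mul x y _ _ hx hy =>
        obtain ⟨l₁, h₁⟩ := hx; obtain ⟨l₂, h₂⟩ := hy
        exact ⟨l₁ ++ l₂, by rw [wprod_append, h₁, h₂]⟩
  · rintro ⟨l, rfl⟩
    induction l with
    | nil => exact inweyl_one
    | cons i l ih =>
        rw [wprod_cons]
        exact inweyl_mul _ _ (inweyl_gen i) ih

lemma wprod_add (l : List (Fin r)) (x y : Fin (r+1) → ℤ) :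
    wprod r l (x + y) = wprod r l x + wprod r l y := by
  induction l with
  | nil => rfl
  | cons i l ih =>
      rw [wprod_cons, mul_apply, mul_apply, mul_apply, ih]
      exact reflect_add _ _ _

lemma wprod_smul (l : List (Fin r)) (c : ℤ) (x : Fin (r+1) → ℤ) :
    wprod r l (c • x) = c • wprod r l x := by
  induction l with
  | nil => rfl
  | cons i l ih =>
      rw [wprod_cons, mul_apply, mul_apply, ih]
      exact reflect_smul _ _ _

lemma wprod_inter (hr : 3 ≤ r) (l : List (Fin r)) (x y : Fin (r+1) → ℤ) :
    inter (wprod r l x) (wprod r l y) = inter x y := by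
  induction l with
  | nil => rfl
  | cons i l ih =>
      rw [wprod_cons, mul_apply, mul_apply]
      rw [show (g r i) (wprod r l x) = reflect (root r i) (wprod r l x) from rfl,
        show (g r i) (wprod r l y) = reflect (root r i) (wprod r l y) from rfl,
        reflect_inter _ (root_sq hr i), ih]

lemma wprod_reverse_mul (hr : 3 ≤ r) (l : List (Fin r)) :
    wprod r l.reverse * wprod r l = 1 := by
  induction l with
  | nil => rfl
  | cons i l ih =>
      rw [wprod_cons, List.reverse_cons, wprod_append, wprod_singleton]
      calc (wprod r l.reverse * g r i) * (g r i * wprod r l)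
          = wprod r l.reverse * ((g r i * g r i) * wprod r l) := by
            rw [mul_assoc, mul_assoc]
        _ = 1 := by rw [g_g hr, one_mul, ih]

lemma wprod_mul_reverse (hr : 3 ≤ r) (l : List (Fin r)) :
    wprod r l * wprod r l.reverse = 1 := by
  have h := wprod_reverse_mul hr l.reverse
  rw [List.reverse_reverse] at h
  exact h

/-! ### Matrices and parity -/

open Matrix

variable (r) in
def JJ (v : Fin (r+1) → ℤ) : Fin (r+1) → ℤ := fun j => if j = 0 then v 0 else -v j

lemma inter_eq_JJ (x v : Fin (r+1) → ℤ) : inter x v = ∑ j, JJ r v j * x j := by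
  have h : ∀ j : Fin (r+1), JJ r v j * x j = (if j = 0 then 2 * (v 0 * x j) else 0) - v j * x j := by
    intro j; unfold JJ; split_ifs with h
    · subst h; ring
    · ring
  rw [Finset.sum_congr rfl (fun j _ => h j), Finset.sum_sub_distrib]
  rw [Finset.sum_ite_eq' Finset.univ (0 : Fin (r+1)) (fun j => 2 * (v 0 * x j))]
  simp only [Finset.mem_univ, if_true]
  unfold inter
  have h2 : ∑ j, v j * x j = ∑ j, x j * v j := by
    apply Finset.sum_congr rfl; intro j _; ring
  rw [h2]
  ring

variable (r) in
def gmat (i : Fin r) : Matrix (Fin (r+1)) (Fin (r+1)) ℤ :=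
  1 + Matrix.replicateCol (Fin 1) (root r i) * Matrix.replicateRow (Fin 1) (JJ r (root r i))

lemma gmat_mulVec (i : Fin r) (x : Fin (r+1) → ℤ) : (gmat r i).mulVec x = g r i x := by
  funext k
  rw [gmat, Matrix.add_mulVec, Matrix.one_mulVec]
  have hcr : ((Matrix.replicateCol (Fin 1) (root r i) * Matrix.replicateRow (Fin 1) (JJ r (root r i))).mulVec x) k
      = root r i k * ∑ j, JJ r (root r i) j * x j := by
    rw [Matrix.mulVec, dotProduct]
    rw [Finset.mul_sum]
    apply Finset.sum_congr rfl
    intro j _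
    rw [Matrix.mul_apply]
    simp [Matrix.replicateCol, Matrix.replicateRow]
    ring
  show x k + _ = _
  rw [hcr, ← inter_eq_JJ]
  show _ = x k + inter x (root r i) • root r i k
  simp only [smul_eq_mul]
  ring

lemma det_gmat (hr : 3 ≤ r) (i : Fin r) : (gmat r i).det = -1 := by
  rw [gmat, show Matrix.det (1 + Matrix.replicateCol (Fin 1) (root r i) * Matrix.replicateRow (Fin 1) (JJ r (root r i)) : Matrix (Fin (r+1)) (Fin (r+1)) ℤ) = 1 + JJ r (root r i) ⬝ᵥ root r i from
    Matrix.det_one_add_replicateCol_mul_replicateRow (ι := Fin 1) _ _]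
  have h : JJ r (root r i) ⬝ᵥ root r i = inter (root r i) (root r i) := by
    rw [inter_eq_JJ]; rfl
  rw [h, root_sq hr]
  norm_num

variable (r) in
def mats (l : List (Fin r)) : Matrix (Fin (r+1)) (Fin (r+1)) ℤ := (l.map (gmat r)).prod

lemma mats_mulVec (l : List (Fin r)) (x : Fin (r+1) → ℤ) :
    (mats r l).mulVec x = wprod r l x := by
  induction l with
  | nil =>
      show (1 : Matrix (Fin (r+1)) (Fin (r+1)) ℤ).mulVec x = x
      rw [Matrix.one_mulVec]
  | cons i l ih =>
      have h1 : mats r (i :: l) = gmat r i * mats r l := by simp [mats]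
      rw [h1, ← Matrix.mulVec_mulVec, ih, wprod_cons, mul_apply, gmat_mulVec]

lemma det_mats (hr : 3 ≤ r) (l : List (Fin r)) : (mats r l).det = (-1 : ℤ)^l.length := by
  induction l with
  | nil => simp [mats]
  | cons i l ih =>
      have h1 : mats r (i :: l) = gmat r i * mats r l := by simp [mats]
      rw [h1, Matrix.det_mul, det_gmat hr, ih, List.length_cons, pow_succ]
      ring

lemma mulVec_single_entry (A : Matrix (Fin (r+1)) (Fin (r+1)) ℤ) (k j : Fin (r+1)) :
    A.mulVec (Pi.single j 1) k = A k j := by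
  rw [Matrix.mulVec, dotProduct]
  rw [Finset.sum_eq_single j]
  · simp
  · intro b _ hb; simp [Pi.single_eq_of_ne hb]
  · intro hj; exact absurd (Finset.mem_univ j) hj

lemma mats_unique (l l' : List (Fin r)) (h : wprod r l = wprod r l') : mats r l = mats r l' := by
  ext k j
  have h1 := mulVec_single_entry (mats r l) k j
  have h2 := mulVec_single_entry (mats r l') k j
  rw [mats_mulVec, h] at h1
  rw [mats_mulVec] at h2
  rw [← h1, ← h2]

lemma word_parity (hr : 3 ≤ r) {l l' : List (Fin r)} (h : wprod r l = wprod r l') :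
    l.length % 2 = l'.length % 2 := by
  have hd : (-1 : ℤ)^l.length = (-1)^l'.length := by
    rw [← det_mats hr l, ← det_mats hr l', mats_unique l l' h]
  rcases Nat.even_or_odd l.length with ha | ha <;> rcases Nat.even_or_odd l'.length with hb | hb
  · rw [Nat.even_iff.mp ha, Nat.even_iff.mp hb]
  · rw [ha.neg_one_pow, hb.neg_one_pow] at hd; norm_num at hd
  · rw [ha.neg_one_pow, hb.neg_one_pow] at hd; norm_num at hd
  · rw [Nat.odd_iff.mp ha, Nat.odd_iff.mp hb]

/-! ### Length -/

variable (r) in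
noncomputable def len (f : Function.End (Fin (r+1) → ℤ)) : ℕ :=
  sInf {n | ∃ l : List (Fin r), wprod r l = f ∧ l.length = n}

lemma len_le (l : List (Fin r)) (f : Function.End (Fin (r+1) → ℤ)) (h : wprod r l = f) :
    len r f ≤ l.length :=
  Nat.sInf_le ⟨l, h, rfl⟩

lemma exists_min_word (f : Function.End (Fin (r+1) → ℤ)) (l₀ : List (Fin r))
    (h : wprod r l₀ = f) : ∃ l : List (Fin r), wprod r l = f ∧ l.length = len r f := by
  have hne : {n | ∃ l : List (Fin r), wprod r l = f ∧ l.length = n}.Nonempty :=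
    ⟨l₀.length, l₀, h, rfl⟩
  exact Nat.sInf_mem hne

lemma len_zero_eq_one (f : Function.End (Fin (r+1) → ℤ)) (l₀ : List (Fin r))
    (h : wprod r l₀ = f) (hlen : len r f = 0) : f = 1 := by
  obtain ⟨l, hl, hlen'⟩ := exists_min_word f l₀ h
  rw [hlen] at hlen'
  rw [List.length_eq_zero_iff.mp hlen'] at hl
  rw [← hl, wprod_nil]

lemma word_len_parity (hr : 3 ≤ r) (f : Function.End (Fin (r+1) → ℤ)) (l : List (Fin r))
    (h : wprod r l = f) : l.length % 2 = len r f % 2 := by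
  obtain ⟨l', hl', hlen'⟩ := exists_min_word f l h
  rw [← hlen']
  exact word_parity hr (h.trans hl'.symm)

lemma len_mul_g_le (f : Function.End (Fin (r+1) → ℤ)) (l₀ : List (Fin r))
    (h : wprod r l₀ = f) (i : Fin r) : len r (f * g r i) ≤ len r f + 1 := by
  obtain ⟨l, hl, hlen⟩ := exists_min_word f l₀ h
  have : wprod r (l ++ [i]) = f * g r i := by
    rw [wprod_append, wprod_singleton, hl]
  calc len r (f * g r i) ≤ (l ++ [i]).length := len_le _ _ this
    _ = len r f + 1 := by rw [List.length_append, hlen]; rfl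

lemma len_mul_g_ne (hr : 3 ≤ r) (f : Function.End (Fin (r+1) → ℤ)) (l₀ : List (Fin r))
    (h : wprod r l₀ = f) (i : Fin r) : len r (f * g r i) ≠ len r f := by
  intro heq
  have h1 : wprod r (l₀ ++ [i]) = f * g r i := by
    rw [wprod_append, wprod_singleton, h]
  have h2 := word_len_parity hr _ _ h1
  have h3 := word_len_parity hr _ _ h
  rw [List.length_append, heq] at h2
  rw [← h3] at h2
  simp at h2
  omega

lemma len_lt_of_mul_g (hr : 3 ≤ r) (f : Function.End (Fin (r+1) → ℤ)) (l₀ : List (Fin r))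
    (h : wprod r l₀ = f) (i : Fin r) (hle : len r (f * g r i) ≤ len r f) :
    len r (f * g r i) + 1 = len r f := by
  have hne := len_mul_g_ne hr f l₀ h i
  have h2 : f = (f * g r i) * g r i := by
    rw [mul_assoc, g_g hr, mul_one]
  have h3 : wprod r (l₀ ++ [i]) = f * g r i := by
    rw [wprod_append, wprod_singleton, h]
  have h4 := len_mul_g_le (f * g r i) _ h3 i
  rw [← h2] at h4
  omega

/-! ### The positive cone spanned by the simple roots -/

variable (r) in
def InCone (x : Fin (r+1) → ℤ) : Prop :=
  ∃ c : Fin r → ℤ, (∀ i, 0 ≤ c i) ∧ x = ∑ i, c i • root r i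

lemma incone_root (i : Fin r) : InCone r (root r i) := by
  refine ⟨Pi.single i 1, ?_, ?_⟩
  · intro j
    by_cases h : j = i
    · subst h; simp
    · simp [Pi.single_eq_of_ne h]
  · rw [Finset.sum_eq_single i]
    · simp
    · intro b _ hb; simp [Pi.single_eq_of_ne hb]
    · intro h; exact absurd (Finset.mem_univ i) h

lemma incone_comb (a b : ℤ) (ha : 0 ≤ a) (hb : 0 ≤ b) (x y : Fin (r+1) → ℤ)
    (hx : InCone r x) (hy : InCone r y) : InCone r (a • x + b • y) := by
  obtain ⟨c, hc, rfl⟩ := hx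
  obtain ⟨d, hd, rfl⟩ := hy
  refine ⟨fun k => a * c k + b * d k, ?_, ?_⟩
  · intro k
    show 0 ≤ a * c k + b * d k
    exact add_nonneg (mul_nonneg ha (hc k)) (mul_nonneg hb (hd k))
  · rw [Finset.smul_sum, Finset.smul_sum, ← Finset.sum_add_distrib]
    apply Finset.sum_congr rfl
    intro k _
    rw [smul_smul, smul_smul, add_smul]

lemma incone_add (x y : Fin (r+1) → ℤ) (hx : InCone r x) (hy : InCone r y) :
    InCone r (x + y) := by
  have h := incone_comb 1 1 zero_le_one zero_le_one x y hx hy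
  simpa using h

lemma incone_smul (a : ℤ) (ha : 0 ≤ a) (x : Fin (r+1) → ℤ) (hx : InCone r x) :
    InCone r (a • x) := by
  have h := incone_comb a 0 ha le_rfl x 0 hx ⟨0, by simp, by simp⟩
  simpa using h

/-! ### The key dichotomy (Humphreys-style induction) -/

lemma g_apply (k : Fin r) (x : Fin (r+1) → ℤ) :
    g r k x = x + inter x (root r k) • root r k := rfl

lemma D2_core (hr : 3 ≤ r) (N : ℕ)
    (ih : ∀ f : Function.End (Fin (r+1) → ℤ), ∀ l₀ : List (Fin r), wprod r l₀ = f →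
      len r f ≤ N → ∀ k, len r f < len r (f * g r k) → InCone r (f (root r k)))
    (f : Function.End (Fin (r+1) → ℤ)) (l : List (Fin r)) (hl : wprod r l = f)
    (hflen : len r f = N + 1)
    (i j : Fin r)
    (hfj : len r (f * g r j) ≤ N)
    (hfi : len r f < len r (f * g r i))
    (L : List (List (Fin r)))
    (hjL : [j] ∈ L)
    (hBi : ∀ u ∈ L,
      ∃ u' ∈ L, g r i * wprod r u = wprod r u' ∧ u'.length ≤ u.length + 1)
    (hBj : ∀ u ∈ L,
      ∃ u' ∈ L, g r j * wprod r u = wprod r u' ∧ u'.length ≤ u.length + 1)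
    (hC : ∀ u ∈ L,
      (∃ u'' ∈ L, wprod r u * g r i = wprod r u'' ∧ u''.length + 1 = u.length) ∨
      (∃ a b : ℤ, 0 ≤ a ∧ 0 ≤ b ∧
        (wprod r u) (root r i) = a • root r i + b • root r j)) :
    InCone r (f (root r i)) := by
  -- the length of f * g r j is exactly N
  have hword_fj : wprod r (l ++ [j]) = f * g r j := by
    rw [wprod_append, wprod_singleton, hl]
  have hfj_eq : len r (f * g r j) + 1 = len r f :=
    len_lt_of_mul_g hr f l hl j (by omega)
  -- the minimality predicate
  set P : ℕ → Prop := fun nv => ∃ lv : List (Fin r), ∃ u ∈ L,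
    wprod r lv * wprod r u = f ∧ lv.length = nv ∧ nv + u.length = len r f with hP
  have hPex : ∃ nv, P nv := by
    obtain ⟨lw, hlw, hlwlen⟩ := exists_min_word (f * g r j) _ hword_fj
    refine ⟨len r (f * g r j), lw, [j], hjL, ?_, hlwlen, ?_⟩
    · rw [wprod_singleton, hlw, mul_assoc, g_g hr, mul_one]
    · simp only [List.length_singleton]; omega
  classical
  set n₀ := Nat.find hPex with hn₀
  obtain ⟨lv, u, huL, hvu, hlvlen, hsum⟩ := Nat.find_spec hPex
  have hn₀_le : n₀ ≤ len r (f * g r j) := by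
    apply Nat.find_le
    obtain ⟨lw, hlw, hlwlen⟩ := exists_min_word (f * g r j) _ hword_fj
    refine ⟨lw, [j], hjL, ?_, hlwlen, ?_⟩
    · rw [wprod_singleton, hlw, mul_assoc, g_g hr, mul_one]
    · simp only [List.length_singleton]; omega
  set v := wprod r lv with hv
  -- len v = n₀
  have hlenv_le : len r v ≤ n₀ := by rw [hn₀, ← hlvlen]; exact len_le lv v rfl
  have hlenv : len r v = n₀ := by
    rcases Nat.lt_or_ge (len r v) n₀ with hlt | hge
    · exfalso
      obtain ⟨lv', hlv', hlv'len⟩ := exists_min_word v lv rfl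
      have hword : wprod r (lv' ++ u) = f := by rw [wprod_append, hlv', hvu]
      have h1 : len r f ≤ len r v + u.length := by
        have := len_le (lv' ++ u) f hword
        rw [List.length_append, hlv'len] at this
        exact this
      omega
    · omega
  -- both ascents at v
  have hup : ∀ s : Fin r, s = i ∨ s = j → len r v < len r (v * g r s) := by
    intro s hs
    by_contra hcon
    push_neg at hcon
    have hdec : len r (v * g r s) + 1 = len r v := len_lt_of_mul_g hr v lv rfl s hcon
    obtain ⟨u', hu'L, hu'prod, hu'len⟩ :
        ∃ u' ∈ L, g r s * wprod r u = wprod r u' ∧ u'.length ≤ u.length + 1 := by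
      rcases hs with h | h
      · rw [h]; exact hBi u huL
      · rw [h]; exact hBj u huL
    have hf2 : (v * g r s) * wprod r u' = f := by
      rw [← hu'prod, ← mul_assoc, mul_assoc v (g r s) (g r s), g_g hr, mul_one, hvu]
    obtain ⟨lw, hlw, hlwlen⟩ := exists_min_word (v * g r s)
      (lv ++ [s]) (by rw [wprod_append, wprod_singleton])
    have hword : wprod r (lw ++ u') = f := by rw [wprod_append, hlw, hf2]
    have hle1 : len r f ≤ len r (v * g r s) + u'.length := by
      have := len_le (lw ++ u') f hword
      rw [List.length_append, hlwlen] at this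
      exact this
    have hPsmall : P (len r (v * g r s)) := by
      refine ⟨lw, u', hu'L, ?_, hlwlen, by omega⟩
      rw [hlw, hf2]
    have := Nat.find_min hPex (m := len r (v * g r s)) (by omega)
    exact this hPsmall
  -- apply the induction hypothesis at v
  have hvN : len r v ≤ N := by omega
  have hconei : InCone r (v (root r i)) := ih v lv rfl hvN i (hup i (Or.inl rfl))
  have hconej : InCone r (v (root r j)) := ih v lv rfl hvN j (hup j (Or.inr rfl))
  -- dichotomy for u
  rcases hC u huL with ⟨u'', hu''L, hu''prod, hu''len⟩ | ⟨a, b, ha, hb, hval⟩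
  · exfalso
    have hf3 : v * wprod r u'' = f * g r i := by
      rw [← hu''prod, ← mul_assoc, hvu]
    have hword : wprod r (lv ++ u'') = f * g r i := by rw [wprod_append, hf3]
    have := len_le (lv ++ u'') _ hword
    rw [List.length_append, hlvlen] at this
    omega
  · have : f (root r i) = v ((wprod r u) (root r i)) := by rw [← hvu]; rfl
    rw [this, hval, hv, wprod_add, wprod_smul, wprod_smul]
    exact incone_comb a b ha hb _ _ hconei hconej

lemma wprod_two (a b : Fin r) : wprod r [a,b] = g r a * g r b := by
  simp [wprod]

lemma wprod_three (a b c : Fin r) : wprod r [a,b,c] = g r a * (g r b * g r c) := by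
  simp [wprod, mul_assoc]

lemma g_comm (hr : 3 ≤ r) {i j : Fin r} (h0 : inter (root r i) (root r j) = 0) :
    g r i * g r j = g r j * g r i := by
  funext x
  exact reflect_comm _ _ h0 x

lemma g_braid (hr : 3 ≤ r) {i j : Fin r} (h1 : inter (root r i) (root r j) = 1) :
    g r i * (g r j * g r i) = g r j * (g r i * g r j) := by
  funext x
  have h1s : inter (root r j) (root r i) = 1 := by rw [inter_comm]; exact h1
  have e1 := reflect_braid (root r i) (root r j) (root_sq hr i) h1 x
  have e2 := reflect_braid (root r j) (root r i) (root_sq hr j) h1s x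
  show reflect (root r i) (reflect (root r j) (reflect (root r i) x)) = _
  rw [e1]
  refine Eq.trans ?_ e2.symm
  module

lemma D2 (hr : 3 ≤ r) (N : ℕ) :
    ∀ f : Function.End (Fin (r+1) → ℤ), ∀ l₀ : List (Fin r), wprod r l₀ = f →
      len r f ≤ N → ∀ i, len r f < len r (f * g r i) → InCone r (f (root r i)) := by
  induction N with
  | zero =>
      intro f l₀ hl₀ hlen i _
      have hf1 : f = 1 := len_zero_eq_one f l₀ hl₀ (by omega)
      rw [hf1]
      exact incone_root i
  | succ N ih =>
      intro f l₀ hl₀ hlenf i hi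
      rcases Nat.lt_or_ge (len r f) (N+1) with hlt | hge
      · exact ih f l₀ hl₀ (by omega) i hi
      have hflen : len r f = N + 1 := by omega
      obtain ⟨l, hl, hllen⟩ := exists_min_word f l₀ hl₀
      have hlne : l ≠ [] := by
        intro h; rw [h] at hllen; simp at hllen; omega
      set j := l.getLast hlne with hj
      have hldecomp : l.dropLast ++ [j] = l := List.dropLast_append_getLast hlne
      have hfj_word : wprod r l.dropLast = f * g r j := by
        have h1 : wprod r (l.dropLast ++ [j]) = f := by rw [hldecomp, hl]
        rw [wprod_append, wprod_singleton] at h1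
        calc wprod r l.dropLast = (wprod r l.dropLast * g r j) * g r j := by
              rw [mul_assoc, g_g hr, mul_one]
          _ = f * g r j := by rw [h1]
      have hfj_le : len r (f * g r j) ≤ N := by
        have h1 := len_le l.dropLast _ hfj_word
        have h2 : l.dropLast.length = l.length - 1 := by simp [List.length_dropLast]
        omega
      have hij : i ≠ j := by
        rintro rfl
        omega
      have h1s' : ∀ h1 : inter (root r i) (root r j) = 1, inter (root r j) (root r i) = 1 := by
        intro h1; rw [inter_comm]; exact h1
      have h0s' : ∀ h0 : inter (root r i) (root r j) = 0, inter (root r j) (root r i) = 0 := by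
        intro h0; rw [inter_comm]; exact h0
      rcases root_pair hr i j hij with h0 | h1
      · -- commuting case
        have hcomm : g r i * g r j = g r j * g r i := g_comm hr h0
        have h0s := h0s' h0
        refine D2_core hr N ih f l hl hflen i j hfj_le hi
          [[], [i], [j], [i,j]] (by simp) ?_ ?_ ?_
        · intro u hu
          simp only [List.mem_cons, List.not_mem_nil, or_false] at hu
          rcases hu with rfl | rfl | rfl | rfl
          · exact ⟨[i], by simp, by rw [wprod_nil, mul_one, wprod_singleton], by simp⟩
          · exact ⟨[], by simp, by rw [wprod_singleton, wprod_nil, g_g hr], by simp⟩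
          · refine ⟨[i,j], by simp, ?_, by simp⟩
            rw [wprod_singleton, wprod_two]
          · refine ⟨[j], by simp, ?_, by simp⟩
            rw [wprod_two, wprod_singleton, ← mul_assoc, g_g hr, one_mul]
        · intro u hu
          simp only [List.mem_cons, List.not_mem_nil, or_false] at hu
          rcases hu with rfl | rfl | rfl | rfl
          · exact ⟨[j], by simp, by rw [wprod_nil, mul_one, wprod_singleton], by simp⟩
          · refine ⟨[i,j], by simp, ?_, by simp⟩
            rw [wprod_singleton, wprod_two]
            exact hcomm.symm
          · exact ⟨[], by simp, by rw [wprod_singleton, wprod_nil, g_g hr], by simp⟩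
          · refine ⟨[i], by simp, ?_, by simp⟩
            rw [wprod_two, wprod_singleton, hcomm, ← mul_assoc, g_g hr, one_mul]
        · intro u hu
          simp only [List.mem_cons, List.not_mem_nil, or_false] at hu
          rcases hu with rfl | rfl | rfl | rfl
          · refine Or.inr ⟨1, 0, by norm_num, by norm_num, ?_⟩
            rw [wprod_nil]
            show root r i = _
            module
          · refine Or.inl ⟨[], by simp, ?_, by simp⟩
            rw [wprod_singleton, wprod_nil, g_g hr]
          · refine Or.inr ⟨1, 0, by norm_num, by norm_num, ?_⟩
            rw [wprod_singleton]
            show root r i + inter (root r i) (root r j) • root r j = _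
            rw [h0]
            module
          · refine Or.inl ⟨[j], by simp, ?_, by simp⟩
            rw [wprod_two, wprod_singleton, hcomm, mul_assoc, g_g hr, mul_one]
      · -- braid case
        have hbr : g r i * (g r j * g r i) = g r j * (g r i * g r j) := g_braid hr h1
        have h1s := h1s' h1
        refine D2_core hr N ih f l hl hflen i j hfj_le hi
          [[], [i], [j], [i,j], [j,i], [i,j,i]] (by simp) ?_ ?_ ?_
        · intro u hu
          simp only [List.mem_cons, List.not_mem_nil, or_false] at hu
          rcases hu with rfl | rfl | rfl | rfl | rfl | rfl
          · exact ⟨[i], by simp, by rw [wprod_nil, mul_one, wprod_singleton], by simp⟩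
          · exact ⟨[], by simp, by rw [wprod_singleton, wprod_nil, g_g hr], by simp⟩
          · refine ⟨[i,j], by simp, ?_, by simp⟩
            rw [wprod_singleton, wprod_two]
          · refine ⟨[j], by simp, ?_, by simp⟩
            rw [wprod_two, wprod_singleton, ← mul_assoc, g_g hr, one_mul]
          · refine ⟨[i,j,i], by simp, ?_, by simp⟩
            rw [wprod_two, wprod_three]
          · refine ⟨[j,i], by simp, ?_, by simp⟩
            rw [wprod_three, wprod_two, ← mul_assoc, g_g hr, one_mul]
        · intro u hu
          simp only [List.mem_cons, List.not_mem_nil, or_false] at hu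
          rcases hu with rfl | rfl | rfl | rfl | rfl | rfl
          · exact ⟨[j], by simp, by rw [wprod_nil, mul_one, wprod_singleton], by simp⟩
          · refine ⟨[j,i], by simp, ?_, by simp⟩
            rw [wprod_singleton, wprod_two]
          · exact ⟨[], by simp, by rw [wprod_singleton, wprod_nil, g_g hr], by simp⟩
          · refine ⟨[i,j,i], by simp, ?_, by simp⟩
            rw [wprod_two, wprod_three]
            exact hbr.symm
          · refine ⟨[i], by simp, ?_, by simp⟩
            rw [wprod_two, wprod_singleton, ← mul_assoc, g_g hr, one_mul]
          · refine ⟨[i,j], by simp, ?_, by simp⟩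
            rw [wprod_three, wprod_two, hbr, ← mul_assoc, g_g hr, one_mul]
        · intro u hu
          simp only [List.mem_cons, List.not_mem_nil, or_false] at hu
          rcases hu with rfl | rfl | rfl | rfl | rfl | rfl
          · refine Or.inr ⟨1, 0, by norm_num, by norm_num, ?_⟩
            rw [wprod_nil]
            show root r i = _
            module
          · refine Or.inl ⟨[], by simp, ?_, by simp⟩
            rw [wprod_singleton, wprod_nil, g_g hr]
          · refine Or.inr ⟨1, 1, by norm_num, by norm_num, ?_⟩
            rw [wprod_singleton]
            show root r i + inter (root r i) (root r j) • root r j = _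
            rw [h1]
            module
          · refine Or.inr ⟨0, 1, by norm_num, by norm_num, ?_⟩
            rw [wprod_two]
            show g r i (g r j (root r i)) = _
            rw [g_apply, g_apply]
            simp only [inter_add_left, inter_smul_left, root_sq hr, h1, h1s]
            module
          · refine Or.inl ⟨[j], by simp, ?_, by simp⟩
            rw [wprod_two, wprod_singleton, mul_assoc, g_g hr, mul_one]
          · refine Or.inl ⟨[i,j], by simp, ?_, by simp⟩
            rw [wprod_three, wprod_two, mul_assoc, mul_assoc, g_g hr, mul_one]

/-! ### The cone lemma -/

lemma inter_zero_right (x : Fin (r+1) → ℤ) : inter x 0 = 0 := by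
  simp [inter]

lemma cone_lemma_aux (hr : 3 ≤ r) (N : ℕ) :
    ∀ f : Function.End (Fin (r+1) → ℤ), ∀ l₀ : List (Fin r), wprod r l₀ = f → len r f ≤ N →
    ∀ z : Fin (r+1) → ℤ, (∀ i, 0 ≤ inter z (root r i)) →
    ∃ c : Fin r → ℤ, (∀ i, 0 ≤ c i) ∧ f z = z + ∑ i, c i • root r i := by
  induction N with
  | zero =>
      intro f l₀ hl₀ hlen z _
      have hf1 : f = 1 := len_zero_eq_one f l₀ hl₀ (by omega)
      refine ⟨0, by simp, ?_⟩
      rw [hf1]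
      show z = z + ∑ i : Fin r, (0:ℤ) • root r i
      simp
  | succ N ih =>
      intro f l₀ hl₀ hlen z hz
      rcases Nat.lt_or_ge (len r f) (N+1) with hlt | hge
      · exact ih f l₀ hl₀ (by omega) z hz
      have hflen : len r f = N + 1 := by omega
      obtain ⟨l, hl, hllen⟩ := exists_min_word f l₀ hl₀
      have hlne : l ≠ [] := by
        intro h; rw [h] at hllen; simp at hllen; omega
      set j := l.getLast hlne with hj
      have hldecomp : l.dropLast ++ [j] = l := List.dropLast_append_getLast hlne
      have hfj_word : wprod r l.dropLast = f * g r j := by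
        have h1 : wprod r (l.dropLast ++ [j]) = f := by rw [hldecomp, hl]
        rw [wprod_append, wprod_singleton] at h1
        calc wprod r l.dropLast = (wprod r l.dropLast * g r j) * g r j := by
              rw [mul_assoc, g_g hr, mul_one]
          _ = f * g r j := by rw [h1]
      have hfj_le : len r (f * g r j) ≤ N := by
        have h1 := len_le l.dropLast _ hfj_word
        have h2 : l.dropLast.length = l.length - 1 := by simp [List.length_dropLast]
        omega
      set w' := f * g r j with hw'
      have hw'f : w' * g r j = f := by
        rw [hw', mul_assoc, g_g hr, mul_one]
      -- f z = w' (g r j z)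
      have hfz : f z = w' z + inter z (root r j) • w' (root r j) := by
        rw [← hw'f, mul_apply]
        have : g r j z = z + inter z (root r j) • root r j := rfl
        rw [this, ← hfj_word, wprod_add, wprod_smul]
      obtain ⟨c, hc, hcz⟩ := ih w' l.dropLast hfj_word hfj_le z hz
      have hD2 : InCone r (w' (root r j)) := by
        apply D2 hr N w' l.dropLast hfj_word hfj_le j
        rw [hw'f]
        omega
      obtain ⟨d, hd, hdz⟩ := hD2
      refine ⟨fun k => c k + inter z (root r j) * d k, ?_, ?_⟩
      · intro k
        exact add_nonneg (hc k) (mul_nonneg (hz j) (hd k))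
      · rw [hfz, hcz, hdz, Finset.smul_sum]
        rw [add_assoc, ← Finset.sum_add_distrib]
        congr 1
        apply Finset.sum_congr rfl
        intro k _
        rw [add_smul, smul_smul]

lemma cone_lemma (hr : 3 ≤ r) (f : Function.End (Fin (r+1) → ℤ)) (l₀ : List (Fin r))
    (hl₀ : wprod r l₀ = f) (z : Fin (r+1) → ℤ) (hz : ∀ i, 0 ≤ inter z (root r i)) :
    ∃ c : Fin r → ℤ, (∀ i, 0 ≤ c i) ∧ f z = z + ∑ i, c i • root r i :=
  cone_lemma_aux hr (len r f) f l₀ hl₀ le_rfl z hz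

/-! ### Inverses and lengths -/

lemma len_inverse (f h : Function.End (Fin (r+1) → ℤ)) (l : List (Fin r))
    (hf : wprod r l = f) (hr : 3 ≤ r) (hfh : f * h = 1) : len r h ≤ len r f := by
  obtain ⟨l', hl', hl'len⟩ := exists_min_word f l hf
  have hinv : wprod r l'.reverse * f = 1 := by
    rw [← hl']; exact wprod_reverse_mul hr l'
  have hh : h = wprod r l'.reverse := by
    calc h = 1 * h := (one_mul h).symm
      _ = (wprod r l'.reverse * f) * h := by rw [hinv]
      _ = wprod r l'.reverse * (f * h) := by rw [mul_assoc]
      _ = wprod r l'.reverse := by rw [hfh, mul_one]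
  have := len_le l'.reverse h hh.symm
  rw [List.length_reverse, hl'len] at this
  exact this

/-! ### Facts about `E_r` -/

lemma er_ne_zero_idx (hr : 3 ≤ r) : (Fin.last r : Fin (r+1)) ≠ 0 := by
  intro h
  rw [Fin.ext_iff, Fin.val_last, val0] at h
  omega

lemma inter_er_er (hr : 3 ≤ r) :
    inter (Eb r (Fin.last r)) (Eb r (Fin.last r)) = -1 := by
  rw [inter_Eb_right, if_neg (er_ne_zero_idx hr)]
  simp [Eb]

lemma root_er_nonneg (hr : 3 ≤ r) (i : Fin r) :
    0 ≤ inter (Eb r (Fin.last r)) (root r i) := by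
  rw [inter_root hr]
  have hlast : (Fin.last r : Fin (r+1)) ≠ 0 := er_ne_zero_idx hr
  have hisLt := i.isLt
  split_ifs with h
  · simp only [Eb_apply, Fin.ext_iff, val0, val1 hr, val2 hr, val3 hr, Fin.val_last]
    split_ifs <;> omega
  · simp only [Eb_apply, Fin.ext_iff, Fin.val_succ, Fin.coe_castSucc, Fin.val_last]
    split_ifs <;> omega

lemma er_coDom (hr : 3 ≤ r) (i : Fin r) :
    0 ≤ inter (Eb r (Fin.last r)) (root r i) := root_er_nonneg hr i

/-- Every Weyl image of `E_r` pairs at least `-1` with `E_r`. -/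
lemma exc_er_ge (hr : 3 ≤ r) (f : Function.End (Fin (r+1) → ℤ)) (l₀ : List (Fin r))
    (hl₀ : wprod r l₀ = f) :
    -1 ≤ inter (f (Eb r (Fin.last r))) (Eb r (Fin.last r)) := by
  obtain ⟨c, hc, hcz⟩ := cone_lemma hr f l₀ hl₀ (Eb r (Fin.last r)) (er_coDom hr)
  rw [hcz, inter_add_left]
  rw [inter_er_er hr]
  have hs : 0 ≤ inter (∑ i, c i • root r i) (Eb r (Fin.last r)) := by
    rw [inter_comm, inter_sum_right]
    apply Finset.sum_nonneg
    intro k _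
    rw [inter_smul_right]
    exact mul_nonneg (hc k) (root_er_nonneg hr k)
  omega

/-! ### The strictly negative functional -/

variable (r) in
def omegaV : Fin (r+1) → ℤ := fun j => if j = 0 then 2 else 1 - ((j : ℕ) : ℤ)

lemma omega_root (hr : 3 ≤ r) (i : Fin r) : inter (omegaV r) (root r i) = -1 := by
  rw [inter_root hr]
  have h1 : ¬ ((1 : Fin (r+1)) = 0) := by
    intro h; rw [Fin.ext_iff, val1 hr, val0] at h; omega
  have h2 : ¬ ((2 : Fin (r+1)) = 0) := by
    intro h; rw [Fin.ext_iff, val2 hr, val0] at h; omega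
  have h3 : ¬ ((3 : Fin (r+1)) = 0) := by
    intro h; rw [Fin.ext_iff, val3 hr, val0] at h; omega
  split_ifs with h
  · simp only [omegaV, if_pos rfl, if_neg h1, if_neg h2, if_neg h3, val1 hr, val2 hr, val3 hr]
    norm_num
  · have hcs : ¬ (i.castSucc = 0) := by
      intro hh; rw [Fin.ext_iff, Fin.coe_castSucc, val0] at hh; exact h hh
    have hsu : ¬ (i.succ = 0) := by
      intro hh; rw [Fin.ext_iff, Fin.val_succ, val0] at hh; omega
    simp only [omegaV, if_neg hcs, if_neg hsu, Fin.val_succ, Fin.coe_castSucc]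
    push_cast
    ring

/-- If a nonnegative combination of simple roots is zero, all coefficients vanish. -/
lemma cone_coeffs_zero (hr : 3 ≤ r) (c : Fin r → ℤ) (hc : ∀ i, 0 ≤ c i)
    (h : ∑ i, c i • root r i = 0) : ∀ i, c i = 0 := by
  have h3 : inter (omegaV r) (∑ i, c i • root r i) = 0 := by rw [h, inter_zero_right]
  rw [inter_sum_right] at h3
  have h4 : ∀ i : Fin r, i ∈ Finset.univ →
      inter (omegaV r) (c i • root r i) = -(c i) := by
    intro i _
    rw [inter_smul_right, omega_root hr]
    ring
  rw [Finset.sum_congr rfl h4] at h3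
  intro i
  have h6 := (Finset.sum_eq_zero_iff_of_nonpos
    (fun j (_ : j ∈ Finset.univ) => neg_nonpos.mpr (hc j))).mp h3 i (Finset.mem_univ i)
  omega

/-! ### The descent lemma -/

lemma descend_aux (hr : 3 ≤ r) (N : ℕ) :
    ∀ f : Function.End (Fin (r+1) → ℤ), ∀ l₀ : List (Fin r), wprod r l₀ = f → len r f ≤ N →
    inter (f (Eb r (Fin.last r))) (Eb r (Fin.last r)) = -1 →
    f (Eb r (Fin.last r)) = Eb r (Fin.last r) := by
  induction N with
  | zero =>
      intro f l₀ hl₀ hlen _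
      have hf1 : f = 1 := len_zero_eq_one f l₀ hl₀ (by omega)
      rw [hf1]
      rfl
  | succ N ih =>
      intro f l₀ hl₀ hlen hm1
      have hif : wprod r l₀.reverse * f = 1 := by rw [← hl₀]; exact wprod_reverse_mul hr l₀
      have hfi : f * wprod r l₀.reverse = 1 := by rw [← hl₀]; exact wprod_mul_reverse hr l₀
      have hfu : wprod r l₀.reverse (f (Eb r (Fin.last r))) = Eb r (Fin.last r) := by
        have h0 : (wprod r l₀.reverse * f) (Eb r (Fin.last r)) = Eb r (Fin.last r) := by
          rw [hif]; rfl
        exact h0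
      by_cases hcoDom : ∀ i, 0 ≤ inter (f (Eb r (Fin.last r))) (root r i)
      · -- chamber uniqueness
        obtain ⟨c, hc, hcu⟩ := cone_lemma hr f l₀ hl₀ (Eb r (Fin.last r)) (er_coDom hr)
        obtain ⟨c', hc', hcu'⟩ := cone_lemma hr (wprod r l₀.reverse) l₀.reverse rfl
          (f (Eb r (Fin.last r))) hcoDom
        rw [hfu] at hcu'
        have h2 : Eb r (Fin.last r) = Eb r (Fin.last r) +
            ((∑ i, c i • root r i) + (∑ i, c' i • root r i)) := by
          calc Eb r (Fin.last r) = f (Eb r (Fin.last r)) + ∑ i, c' i • root r i := hcu'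
            _ = (Eb r (Fin.last r) + ∑ i, c i • root r i) + ∑ i, c' i • root r i := by rw [← hcu]
            _ = _ := by rw [add_assoc]
        have hsum : (∑ i, c i • root r i) + (∑ i, c' i • root r i) = 0 :=
          (left_eq_add.mp h2)
        have hsum2 : ∑ i, (c i + c' i) • root r i = 0 := by
          rw [← hsum, ← Finset.sum_add_distrib]
          apply Finset.sum_congr rfl
          intro k _
          rw [add_smul]
        have hz := cone_coeffs_zero hr (fun i => c i + c' i)
          (fun i => add_nonneg (hc i) (hc' i)) hsum2
        have hcz : ∀ i, c i = 0 := by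
          intro i
          have h1 : c i + c' i = 0 := hz i
          have h2 := hc i
          have h3 := hc' i
          omega
        rw [hcu]
        have : ∑ i, c i • root r i = 0 := by
          apply Finset.sum_eq_zero
          intro i _
          rw [hcz i, zero_smul]
        rw [this, add_zero]
      · push_neg at hcoDom
        obtain ⟨i, hi⟩ := hcoDom
        -- length descent
        have hlenfinv : len r (wprod r l₀.reverse) = len r f := by
          apply le_antisymm
          · exact len_inverse f (wprod r l₀.reverse) l₀ hl₀ hr hfi
          · exact len_inverse (wprod r l₀.reverse) f l₀.reverse rfl hr hif
        have hdesc : ¬ (len r (wprod r l₀.reverse) < len r (wprod r l₀.reverse * g r i)) := by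
          intro hlt
          obtain ⟨c, hc, hcr⟩ := D2 hr (len r (wprod r l₀.reverse))
            (wprod r l₀.reverse) l₀.reverse rfl le_rfl i hlt
          have h5 := wprod_inter hr l₀.reverse (f (Eb r (Fin.last r))) (root r i)
          rw [hfu, hcr] at h5
          have h6 : 0 ≤ inter (Eb r (Fin.last r)) (∑ j, c j • root r j) := by
            rw [inter_sum_right]
            apply Finset.sum_nonneg
            intro k _
            rw [inter_smul_right]
            exact mul_nonneg (hc k) (er_coDom hr k)
          omega
        have hne := len_mul_g_ne hr (wprod r l₀.reverse) l₀.reverse rfl i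
        have hlt2 : len r (wprod r l₀.reverse * g r i) < len r (wprod r l₀.reverse) := by omega
        -- f' = g i * f and its length
        have hf'word : wprod r (i :: l₀) = g r i * f := by rw [wprod_cons, hl₀]
        have hinv2 : (wprod r l₀.reverse * g r i) * (g r i * f) = 1 := by
          rw [mul_assoc, ← mul_assoc (g r i) (g r i) f, g_g hr, one_mul, hif]
        have hlenf' : len r (g r i * f) ≤ N := by
          have h6 : len r (g r i * f) ≤ len r (wprod r l₀.reverse * g r i) :=
            len_inverse (wprod r l₀.reverse * g r i) (g r i * f)
              (l₀.reverse ++ [i]) (by rw [wprod_append, wprod_singleton]) hr hinv2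
          omega
        -- value of the new class
        have hf'E : (g r i * f) (Eb r (Fin.last r)) = f (Eb r (Fin.last r)) +
            inter (f (Eb r (Fin.last r))) (root r i) • root r i := by
          rw [mul_apply]
          rfl
        have hval : inter ((g r i * f) (Eb r (Fin.last r))) (Eb r (Fin.last r)) =
            -1 + inter (f (Eb r (Fin.last r))) (root r i) *
              inter (root r i) (Eb r (Fin.last r)) := by
          rw [hf'E, inter_add_left, inter_smul_left, hm1]
        have hρ0 : 0 ≤ inter (root r i) (Eb r (Fin.last r)) := by
          rw [inter_comm]; exact er_coDom hr i
        have hρz : inter (root r i) (Eb r (Fin.last r)) = 0 := by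
          by_contra hne2
          have hb := exc_er_ge hr (g r i * f) (i :: l₀) hf'word
          have h7 : inter (f (Eb r (Fin.last r))) (root r i) *
              inter (root r i) (Eb r (Fin.last r)) ≤
              -inter (root r i) (Eb r (Fin.last r)) := by
            have h8 := mul_le_mul_of_nonneg_right
              (show inter (f (Eb r (Fin.last r))) (root r i) ≤ -1 by omega) hρ0
            rw [neg_one_mul] at h8
            exact h8
          omega
        have hval0 : inter ((g r i * f) (Eb r (Fin.last r))) (Eb r (Fin.last r)) = -1 := by
          rw [hval, hρz]; ring
        have hrec := ih (g r i * f) (i :: l₀) hf'word hlenf' hval0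
        have hu : f (Eb r (Fin.last r)) = g r i ((g r i * f) (Eb r (Fin.last r))) := by
          rw [mul_apply]
          exact (reflect_invol _ (root_sq hr i) (f (Eb r (Fin.last r)))).symm
        rw [hrec] at hu
        have hfix : g r i (Eb r (Fin.last r)) = Eb r (Fin.last r) := by
          rw [g_apply]
          have h9 : inter (Eb r (Fin.last r)) (root r i) = 0 := by
            rw [inter_comm]; exact hρz
          rw [h9, zero_smul, add_zero]
        rw [hfix] at hu
        exact hu

lemma descend (hr : 3 ≤ r) (f : Function.End (Fin (r+1) → ℤ)) (l₀ : List (Fin r))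
    (hl₀ : wprod r l₀ = f)
    (hm1 : inter (f (Eb r (Fin.last r))) (Eb r (Fin.last r)) = -1) :
    f (Eb r (Fin.last r)) = Eb r (Fin.last r) :=
  descend_aux hr (len r f) f l₀ hl₀ le_rfl hm1

/-! ### Pairing lemmas -/

lemma estandard_root_nonneg (hr : 3 ≤ r) (x : Fin (r+1) → ℤ) (hx : EStandard r x)
    (i : Fin r) : 0 ≤ inter x (root r i) := by
  obtain ⟨h1, hmono, hlast, h12, h123⟩ := hx
  rw [inter_root hr]
  split_ifs with h
  · omega
  · have hle : i.castSucc ≤ i.succ := by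
      rw [Fin.le_def, Fin.coe_castSucc, Fin.val_succ]; omega
    have hv : 1 ≤ (i.castSucc : ℕ) := by
      rw [Fin.coe_castSucc]; omega
    have := hmono i.castSucc i.succ hv hle
    omega

lemma estandard_er_nonneg (hr : 3 ≤ r) (x : Fin (r+1) → ℤ) (hx : EStandard r x) :
    0 ≤ inter x (Eb r (Fin.last r)) := by
  rw [inter_Eb_right, if_neg (er_ne_zero_idx hr)]
  exact hx.2.2.1

/-- Key lemma 1: an E-standard class pairs nonnegatively with any exceptional class. -/
lemma estandard_inter_exc (hr : 3 ≤ r) (x : Fin (r+1) → ℤ) (hx : EStandard r x)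
    (y : Fin (r+1) → ℤ) (hy : Exceptional r y) : 0 ≤ inter x y := by
  obtain ⟨f, hf, rfl⟩ := hy
  obtain ⟨l, rfl⟩ := (InWeyl_iff_word f).mp hf
  obtain ⟨c, hc, hcy⟩ := cone_lemma hr (wprod r l) l rfl (Eb r (Fin.last r)) (er_coDom hr)
  rw [hcy, inter_add_right, inter_sum_right]
  have h1 := estandard_er_nonneg hr x hx
  have h2 : 0 ≤ ∑ i, inter x (c i • root r i) := by
    apply Finset.sum_nonneg
    intro k _
    rw [inter_smul_right]
    exact mul_nonneg (hc k) (estandard_root_nonneg hr x hx k)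
  omega

/-- Exceptional classes have self-intersection `-1`. -/
lemma exc_sq (hr : 3 ≤ r) (y : Fin (r+1) → ℤ) (hy : Exceptional r y) : inter y y = -1 := by
  obtain ⟨f, hf, rfl⟩ := hy
  obtain ⟨l, rfl⟩ := (InWeyl_iff_word f).mp hf
  rw [wprod_inter hr]
  exact inter_er_er hr

/-- Key lemma 2: two distinct exceptional classes pair nonnegatively. -/
lemma exc_inter_exc (hr : 3 ≤ r) (F G : Fin (r+1) → ℤ)
    (hF : Exceptional r F) (hG : Exceptional r G) (hne : F ≠ G) : 0 ≤ inter F G := by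
  obtain ⟨fG, hfG, rfl⟩ := hG
  obtain ⟨lG, rfl⟩ := (InWeyl_iff_word fG).mp hfG
  obtain ⟨fF, hfF, rfl⟩ := hF
  obtain ⟨lF, rfl⟩ := (InWeyl_iff_word fF).mp hfF
  have hIG : wprod r lG.reverse (wprod r lG (Eb r (Fin.last r))) = Eb r (Fin.last r) := by
    have h0 : (wprod r lG.reverse * wprod r lG) (Eb r (Fin.last r)) = Eb r (Fin.last r) := by
      rw [wprod_reverse_mul hr]; rfl
    exact h0
  have hkey : inter (wprod r lF (Eb r (Fin.last r))) (wprod r lG (Eb r (Fin.last r))) =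
      inter (wprod r lG.reverse (wprod r lF (Eb r (Fin.last r)))) (Eb r (Fin.last r)) := by
    rw [← wprod_inter hr lG.reverse (wprod r lF (Eb r (Fin.last r)))
      (wprod r lG (Eb r (Fin.last r))), hIG]
  have hu : wprod r lG.reverse (wprod r lF (Eb r (Fin.last r))) =
      wprod r (lG.reverse ++ lF) (Eb r (Fin.last r)) := by
    rw [wprod_append]; rfl
  have hge := exc_er_ge hr (wprod r (lG.reverse ++ lF)) (lG.reverse ++ lF) rfl
  rcases Int.lt_or_le (inter (wprod r (lG.reverse ++ lF) (Eb r (Fin.last r)))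
      (Eb r (Fin.last r))) 0 with hlt | hle
  · exfalso
    have hm1 : inter (wprod r (lG.reverse ++ lF) (Eb r (Fin.last r))) (Eb r (Fin.last r)) = -1 := by
      omega
    have hd := descend hr (wprod r (lG.reverse ++ lF)) (lG.reverse ++ lF) rfl hm1
    -- then F = G
    apply hne
    have h1 : wprod r lG.reverse (wprod r lF (Eb r (Fin.last r))) = Eb r (Fin.last r) := by
      rw [hu, hd]
    have h2 : wprod r lG (wprod r lG.reverse (wprod r lF (Eb r (Fin.last r)))) =
        wprod r lG (Eb r (Fin.last r)) := by rw [h1]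
    have h3 : wprod r lG (wprod r lG.reverse (wprod r lF (Eb r (Fin.last r)))) =
        wprod r lF (Eb r (Fin.last r)) := by
      have h4 : (wprod r lG * wprod r lG.reverse) (wprod r lF (Eb r (Fin.last r))) =
          wprod r lF (Eb r (Fin.last r)) := by
        rw [wprod_mul_reverse hr]; rfl
      exact h4
    rw [← h3, h2]
  · rw [hkey, hu]
    exact hle

/-- A Weyl transform of an exceptional class is exceptional. -/
lemma exc_weyl (f : Function.End (Fin (r+1) → ℤ)) (hf : InWeyl r f)
    (y : Fin (r+1) → ℤ) (hy : Exceptional r y) : Exceptional r (f y) := by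
  obtain ⟨h, hh, rfl⟩ := hy
  have h' : Function.End (Fin (r+1) → ℤ) := h
  refine ⟨f * (show Function.End (Fin (r+1) → ℤ) from h), inweyl_mul f h hf hh, rfl⟩

/-- A standard class pairs nonnegatively with any exceptional class. -/
lemma standard_inter_exc (hr : 3 ≤ r) (A : Fin (r+1) → ℤ) (hA : Standard r A)
    (y : Fin (r+1) → ℤ) (hy : Exceptional r y) : 0 ≤ inter A y := by
  obtain ⟨f, hf, hstd⟩ := hA
  obtain ⟨l, rfl⟩ := (InWeyl_iff_word f).mp hf
  have h1 : inter A y = inter (wprod r l A) (wprod r l y) := (wprod_inter hr l A y).symm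
  rw [h1]
  exact estandard_inter_exc hr _ hstd _ (exc_weyl _ ((InWeyl_iff_word _).mpr ⟨l, rfl⟩) y hy)

lemma inter_sum_left {ι : Type*} (s : Finset ι) (f : ι → Fin (r+1) → ℤ) (y : Fin (r+1) → ℤ) :
    inter (∑ i ∈ s, f i) y = ∑ i ∈ s, inter (f i) y := by
  rw [inter_comm, inter_sum_right]
  apply Finset.sum_congr rfl
  intro k _
  rw [inter_comm]

lemma inter_decomp_left {ι : Type*} [Fintype ι] (B : Fin (r+1) → ℤ) (m : ι → ℤ)
    (G : ι → Fin (r+1) → ℤ) (x : Fin (r+1) → ℤ) :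
    inter (B + ∑ j, m j • G j) x = inter B x + ∑ j, m j * inter (G j) x := by
  rw [inter_add_left, inter_sum_left]
  congr 1
  apply Finset.sum_congr rfl
  intro k _
  rw [inter_smul_left]

end OD

open OD in
theorem orthogonal_decomposition_unique' (r : ℕ) (hr : 3 ≤ r)
    (D : Fin (r + 1) → ℤ)
    (s t : ℕ) (A B : Fin (r + 1) → ℤ)
    (n : Fin s → ℤ) (m : Fin t → ℤ)
    (F : Fin s → (Fin (r + 1) → ℤ)) (G : Fin t → (Fin (r + 1) → ℤ))
    (hA : Standard r A) (hB : Standard r B)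
    (hn : ∀ i, 0 < n i) (hm : ∀ i, 0 < m i)
    (hF : ∀ i, Exceptional r (F i)) (hG : ∀ i, Exceptional r (G i))
    (hFo : ∀ i j, i ≠ j → inter (F i) (F j) = 0)
    (hGo : ∀ i j, i ≠ j → inter (G i) (G j) = 0)
    (hAF : ∀ i, inter A (F i) = 0) (hBG : ∀ i, inter B (G i) = 0)
    (hD1 : D = A + ∑ i, n i • F i) (hD2 : D = B + ∑ i, m i • G i) :
    A = B ∧ ∃ e : Fin s ≃ Fin t, ∀ i, F i = G (e i) ∧ n i = m (e i) := by
  classical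
  -- intersection of D with the F's and G's
  have dF : ∀ k, inter D (F k) = -(n k) := by
    intro k
    rw [hD1, inter_decomp_left, hAF k]
    rw [Finset.sum_eq_single k]
    · rw [exc_sq hr _ (hF k)]; ring
    · intro i _ hik
      rw [hFo i k hik, mul_zero]
    · intro hk; exact absurd (Finset.mem_univ k) hk
  have dG : ∀ k, inter D (G k) = -(m k) := by
    intro k
    rw [hD2, inter_decomp_left, hBG k]
    rw [Finset.sum_eq_single k]
    · rw [exc_sq hr _ (hG k)]; ring
    · intro i _ hik
      rw [hGo i k hik, mul_zero]
    · intro hk; exact absurd (Finset.mem_univ k) hk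
  -- distinctness
  have injF : ∀ k k', F k = F k' → k = k' := by
    intro k k' heq
    by_contra hne
    have h1 := hFo k k' hne
    rw [heq] at h1
    have h2 := exc_sq hr _ (hF k')
    omega
  have injG : ∀ k k', G k = G k' → k = k' := by
    intro k k' heq
    by_contra hne
    have h1 := hGo k k' hne
    rw [heq] at h1
    have h2 := exc_sq hr _ (hG k')
    omega
  -- matching
  have hmatchF : ∀ k : Fin s, ∃ j : Fin t, G j = F k := by
    intro k
    by_contra hno
    push_neg at hno
    have h1 := dF k
    have h2 : inter D (F k) = inter B (F k) + ∑ j, m j * inter (G j) (F k) := by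
      rw [hD2, inter_decomp_left]
    have h3 : 0 ≤ inter B (F k) := standard_inter_exc hr B hB _ (hF k)
    have h4 : 0 ≤ ∑ j, m j * inter (G j) (F k) := by
      apply Finset.sum_nonneg
      intro j _
      exact mul_nonneg (le_of_lt (hm j)) (exc_inter_exc hr _ _ (hG j) (hF k) (hno j))
    have h5 := hn k
    omega
  have hmatchG : ∀ j : Fin t, ∃ k : Fin s, F k = G j := by
    intro j
    by_contra hno
    push_neg at hno
    have h1 := dG j
    have h2 : inter D (G j) = inter A (G j) + ∑ k, n k * inter (F k) (G j) := by
      rw [hD1, inter_decomp_left]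
    have h3 : 0 ≤ inter A (G j) := standard_inter_exc hr A hA _ (hG j)
    have h4 : 0 ≤ ∑ k, n k * inter (F k) (G j) := by
      apply Finset.sum_nonneg
      intro k _
      exact mul_nonneg (le_of_lt (hn k)) (exc_inter_exc hr _ _ (hF k) (hG j) (hno k))
    have h5 := hm j
    omega
  set φ : Fin s → Fin t := fun k => Classical.choose (hmatchF k) with hφ
  have hGφ : ∀ k, G (φ k) = F k := fun k => Classical.choose_spec (hmatchF k)
  set ψ : Fin t → Fin s := fun j => Classical.choose (hmatchG j) with hψ
  have hFψ : ∀ j, F (ψ j) = G j := fun j => Classical.choose_spec (hmatchG j)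
  have hlinv : Function.LeftInverse ψ φ := by
    intro k
    apply injF
    rw [hFψ (φ k), hGφ k]
  have hrinv : Function.RightInverse ψ φ := by
    intro j
    apply injG
    rw [hGφ (ψ j), hFψ j]
  set e : Fin s ≃ Fin t := ⟨φ, ψ, hlinv, hrinv⟩ with he
  have hnm : ∀ k, n k = m (φ k) := by
    intro k
    have h1 := dF k
    have h2 := dG (φ k)
    rw [hGφ k] at h2
    omega
  have hSeq : (∑ k, n k • F k) = ∑ j, m j • G j := by
    rw [← Equiv.sum_comp e (fun j => m j • G j)]
    apply Finset.sum_congr rfl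
    intro k _
    show n k • F k = m (φ k) • G (φ k)
    rw [← hnm k]
    congr 1
    exact (hGφ k).symm
  constructor
  · have h1 : A + (∑ k, n k • F k) = B + (∑ k, n k • F k) := by
      rw [← hD1, hSeq, ← hD2]
    exact add_right_cancel h1
  · exact ⟨e, fun k => ⟨(hGφ k).symm, hnm k⟩⟩

/-- The decomposition of a semi-standard class `D` in `Pic_r` as an orthogonal sum
`D = A + n_1F_1 + ⋯ + n_sF_s`, with `A` standard, `n_i > 0`, the `F_i` pairwise
orthogonal exceptional classes and `A·F_i = 0`, is unique: given a second such
decomposition `D = B + m_1G_1 + ⋯ + m_tG_t`, one has `A = B` and, after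
reordering (i.e. along some bijection `Fin s ≃ Fin t`), `F_i = G_i` and `n_i = m_i`. -/
theorem orthogonal_decomposition_unique (r : ℕ) (hr : 3 ≤ r)
    (D : Fin (r + 1) → ℤ) (hD : SemiStandard r D)
    (s t : ℕ) (A B : Fin (r + 1) → ℤ)
    (n : Fin s → ℤ) (m : Fin t → ℤ)
    (F : Fin s → (Fin (r + 1) → ℤ)) (G : Fin t → (Fin (r + 1) → ℤ))
    (hA : Standard r A) (hB : Standard r B)
    (hn : ∀ i, 0 < n i) (hm : ∀ i, 0 < m i)
    (hF : ∀ i, Exceptional r (F i)) (hG : ∀ i, Exceptional r (G i))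
    (hFo : ∀ i j, i ≠ j → inter (F i) (F j) = 0)
    (hGo : ∀ i j, i ≠ j → inter (G i) (G j) = 0)
    (hAF : ∀ i, inter A (F i) = 0) (hBG : ∀ i, inter B (G i) = 0)
    (hD1 : D = A + ∑ i, n i • F i) (hD2 : D = B + ∑ i, m i • G i) :
    A = B ∧ ∃ e : Fin s ≃ Fin t, ∀ i, F i = G (e i) ∧ n i = m (e i) :=
  orthogonal_decomposition_unique' r hr D s t A B n m F G hA hB hn hm hF hG hFo hGo hAF hBG hD1 hD2
end
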